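/- arXiv:2410.11705 — 14 statements merged into one kernel-verified Lean document; each statement's English description precedes it below -/
import Mathlib

section
/- Let E be a finite-dimensional real inner product space, let U : E → ℝ be convex and differentiable with gradient ∇U, let χ ≥ 0 and H, J_p ∈ E. If ‖H − ∇U(J_p)‖ ≤ χ, then J_p itself minimizes the incremental functional F_H(J) = U(J) − ⟪H, J⟫ + χ‖J − J_p‖ over E; i.e., the magnetic polarization does not change when the effective driving field does not exceed the pinning strength. -/
open RealInnerProductSpace

theorem ConvexOn.fderiv_sub_le {E : Type*} [NormedAddCommGroup E] [NormedSpace ℝ E]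
    {s : Set E} {f : E → ℝ} {f' : E →L[ℝ] ℝ} {x y : E} (hf : ConvexOn ℝ s f)
    (hx : x ∈ s) (hy : y ∈ s) (hf' : HasFDerivAt f f' x) :
    f' (y - x) ≤ f y - f x := by
  have hline : HasDerivAt (AffineMap.lineMap (k := ℝ) x y) (y - x) (0 : ℝ) :=
    AffineMap.hasDerivAt_lineMap
  have hderiv : HasDerivAt (f ∘ AffineMap.lineMap (k := ℝ) x y) (f' (y - x)) 0 := by
    refine hf'.comp_hasDerivAt_of_eq 0 hline ?_
    simp
  have hslope := (hf.comp_affineMap (AffineMap.lineMap x y)).le_slope_of_hasDerivAt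
    (by simpa using hx) (by simpa using hy) one_pos hderiv
  simpa [slope_def_field] using hslope

theorem ConvexOn.inner_gradient_sub_le {E : Type*} [NormedAddCommGroup E]
    [InnerProductSpace ℝ E] [CompleteSpace E] {s : Set E} {f : E → ℝ} {g x y : E}
    (hf : ConvexOn ℝ s f) (hx : x ∈ s) (hy : y ∈ s) (hg : HasGradientAt f g x) :
    ⟪g, y - x⟫ ≤ f y - f x := by
  simpa using hf.fderiv_sub_le hx hy hg.hasFDerivAt

theorem no_update_below_pinning_threshold_general
    {E : Type*} [NormedAddCommGroup E] [InnerProductSpace ℝ E] [FiniteDimensional ℝ E]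
    (U : E → ℝ) (U' : E → E) (hU : ConvexOn ℝ Set.univ U)
    (hU' : ∀ J : E, HasGradientAt U (U' J) J)
    (χ : ℝ) (H Jp : E)
    (hsmall : ‖H - U' Jp‖ ≤ χ) :
    ∀ J : E,
      U Jp - ⟪H, Jp⟫ + χ * ‖Jp - Jp‖ ≤ U J - ⟪H, J⟫ + χ * ‖J - Jp‖ := by
  intro J
  have htangent : ⟪U' Jp, J - Jp⟫ ≤ U J - U Jp :=
    hU.inner_gradient_sub_le trivial trivial (hU' Jp)
  have hpinning : ⟪H - U' Jp, J - Jp⟫ ≤ χ * ‖J - Jp‖ :=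
    calc ⟪H - U' Jp, J - Jp⟫ ≤ ‖H - U' Jp‖ * ‖J - Jp‖ := real_inner_le_norm _ _
      _ ≤ χ * ‖J - Jp‖ := by gcongr
  have hsplit : ⟪H, J⟫ - ⟪H, Jp⟫ = ⟪U' Jp, J - Jp⟫ + ⟪H - U' Jp, J - Jp⟫ := by
    rw [inner_sub_left, inner_sub_right, inner_sub_right]
    ring
  rw [sub_self, norm_zero, mul_zero, add_zero]
  linarith

/-- if the effective driving field does not exceed the pinning strength,
the previous polarization `J_p` minimizes the incremental functional. -/
theorem no_update_below_pinning_threshold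
    {E : Type*} [NormedAddCommGroup E] [InnerProductSpace ℝ E] [FiniteDimensional ℝ E]
    (U : E → ℝ) (U' : E → E) (hU : ConvexOn ℝ Set.univ U)
    (hU' : ∀ J : E, HasGradientAt U (U' J) J)
    (χ : ℝ) (hχ : 0 ≤ χ) (H Jp : E)
    (hsmall : ‖H - U' Jp‖ ≤ χ) :
    ∀ J : E,
      U Jp - ⟪H, Jp⟫ + χ * ‖Jp - Jp‖ ≤ U J - ⟪H, J⟫ + χ * ‖J - Jp‖ :=
  no_update_below_pinning_threshold_general U U' hU hU' χ H Jp hsmall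
end

section
/- (Danskin-type theorem for strongly convex inner problems.) Let E be a finite-dimensional real inner product space, let m > 0 and let g : E → ℝ be continuous and m-strongly convex. For every H ∈ E let y(H) denote the unique maximizer of J ↦ ⟪H, J⟫ − g(J) over E, and define φ : E → ℝ by φ(H) = ⟪H, y(H)⟫ − g(y(H)) (the supremum value). Then φ is convex and, for every H ∈ E, φ has a gradient at H equal to y(H), i.e., HasGradientAt φ (y H) H. -/
/-! The value function `φ H = sup_J (⟪H, J⟫ - g J)` is a supremum of affine functions of `H`, hence
convex. Testing the maximality of `y H` against `y H'` and vice versa traps the remainder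
`φ H' - φ H - ⟪y H, H' - H⟫` between `0` and `⟪H' - H, y H' - y H⟫`, so `φ` has gradient `y H` at
every point where `y` is continuous. Strong convexity of `g` makes the maximizer `y` Lipschitz with
constant `2 / m`. -/

open RealInnerProductSpace Set Topology

-- The constant `m / 4`, not the sharp `m / 2`, comes from testing strong convexity at the
-- midpoint only.
lemma StrongConvexOn.quadratic_growth_of_isMinOn {E : Type*} [NormedAddCommGroup E]
    [NormedSpace ℝ E] {s : Set E} {m : ℝ} {f : E → ℝ} (hf : StrongConvexOn s m f) {x₀ x : E}
    (hmin : IsMinOn f s x₀) (hx₀ : x₀ ∈ s) (hx : x ∈ s) :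
    f x₀ + m / 4 * ‖x - x₀‖ ^ 2 ≤ f x := by
  have hmid := hf.2 hx₀ hx (by norm_num : (0 : ℝ) ≤ 1 / 2) (by norm_num : (0 : ℝ) ≤ 1 / 2)
    (by norm_num)
  have hle : f x₀ ≤ f ((1 / 2 : ℝ) • x₀ + (1 / 2 : ℝ) • x) :=
    hmin (hf.1 hx₀ hx (by norm_num) (by norm_num) (by norm_num))
  rw [norm_sub_rev] at hmid
  simp only [smul_eq_mul] at hmid
  linarith

section Danskin

variable {E : Type*} [NormedAddCommGroup E] [InnerProductSpace ℝ E] {g : E → ℝ} {y : E → E}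

def IsConjugateMaximizer (g : E → ℝ) (y : E → E) : Prop :=
  ∀ H J : E, ⟪H, J⟫ - g J ≤ ⟪H, y H⟫ - g (y H)

def conjugateValue (g : E → ℝ) (y : E → E) (H : E) : ℝ :=
  ⟪H, y H⟫ - g (y H)

lemma IsConjugateMaximizer.inner_sub_le_conjugateValue_sub (hy : IsConjugateMaximizer g y)
    (H H' : E) : ⟪H' - H, y H⟫ ≤ conjugateValue g y H' - conjugateValue g y H := by
  have := hy H' (y H)
  rw [conjugateValue, conjugateValue, inner_sub_left]
  linarith

lemma IsConjugateMaximizer.conjugateValue_sub_le_inner_sub (hy : IsConjugateMaximizer g y)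
    (H H' : E) : conjugateValue g y H' - conjugateValue g y H ≤ ⟪H' - H, y H'⟫ := by
  have := hy H (y H')
  rw [conjugateValue, conjugateValue, inner_sub_left]
  linarith

lemma IsConjugateMaximizer.convexOn_conjugateValue (hy : IsConjugateMaximizer g y) :
    ConvexOn ℝ univ (conjugateValue g y) := by
  refine ⟨convex_univ, fun H₁ _ H₂ _ a b ha hb hab => ?_⟩
  set M := a • H₁ + b • H₂
  have h₁ := mul_le_mul_of_nonneg_left (hy H₁ (y M)) ha
  have h₂ := mul_le_mul_of_nonneg_left (hy H₂ (y M)) hb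
  have hM : ⟪M, y M⟫ = a * ⟪H₁, y M⟫ + b * ⟪H₂, y M⟫ := by
    simp only [M, inner_add_left, real_inner_smul_left]
  have hg : g (y M) = a * g (y M) + b * g (y M) := by rw [← add_mul, hab, one_mul]
  simp only [conjugateValue, smul_eq_mul]
  rw [hM]
  linarith

lemma IsConjugateMaximizer.hasGradientAt_conjugateValue [CompleteSpace E]
    (hy : IsConjugateMaximizer g y) {H : E} (hcont : ContinuousAt y H) :
    HasGradientAt (conjugateValue g y) (y H) H := by
  rw [hasGradientAt_iff_isLittleO, Asymptotics.isLittleO_iff]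
  intro ε hε
  have hnear : ∀ᶠ H' in 𝓝 H, ‖y H' - y H‖ ≤ ε := by
    filter_upwards [Metric.tendsto_nhds.mp hcont ε hε] with H' hH'
    rw [dist_eq_norm] at hH'
    exact hH'.le
  filter_upwards [hnear] with H' hH'
  have hlow := hy.inner_sub_le_conjugateValue_sub H H'
  have hup := hy.conjugateValue_sub_le_inner_sub H H'
  have hcs : ⟪H' - H, y H' - y H⟫ ≤ ‖H' - H‖ * ‖y H' - y H‖ := real_inner_le_norm _ _
  have hε' : ‖H' - H‖ * ‖y H' - y H‖ ≤ ε * ‖H' - H‖ := by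
    rw [mul_comm ε]
    exact mul_le_mul_of_nonneg_left hH' (norm_nonneg _)
  rw [inner_sub_right] at hcs
  rw [real_inner_comm (H' - H) (y H), Real.norm_eq_abs, abs_of_nonneg (by linarith)]
  linarith

lemma StrongConvexOn.mul_sq_norm_sub_le_inner_of_isConjugateMaximizer {m : ℝ}
    (hg : StrongConvexOn univ m g) (hy : IsConjugateMaximizer g y) (H H' : E) :
    m / 2 * ‖y H' - y H‖ ^ 2 ≤ ⟪H' - H, y H' - y H⟫ := by
  have hgrowth (H J : E) : ⟪H, J⟫ - g J + m / 4 * ‖J - y H‖ ^ 2 ≤ ⟪H, y H⟫ - g (y H) := by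
    have hconv : StrongConvexOn univ m (g - fun J => ⟪H, J⟫) := by
      unfold StrongConvexOn
      simpa using hg.sub (uniformConcaveOn_zero.mpr ((innerₛₗ ℝ H).concaveOn convex_univ))
    have := hconv.quadratic_growth_of_isMinOn (x₀ := y H) (x := J)
      (isMinOn_univ_iff.mpr fun J =>
        show g (y H) - ⟪H, y H⟫ ≤ g J - ⟪H, J⟫ by linarith [hy H J]) (mem_univ _) (mem_univ _)
    simp only [Pi.sub_apply] at this
    linarith
  have h₁ := hgrowth H (y H')
  have h₂ := hgrowth H' (y H)
  rw [norm_sub_rev] at h₂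
  simp only [inner_sub_left, inner_sub_right]
  linarith

lemma StrongConvexOn.lipschitzWith_of_isConjugateMaximizer {m : ℝ} (hm : 0 < m)
    (hg : StrongConvexOn univ m g) (hy : IsConjugateMaximizer g y) :
    LipschitzWith (2 / m).toNNReal y := by
  refine LipschitzWith.of_dist_le' fun H' H => ?_
  rw [dist_eq_norm, dist_eq_norm, div_mul_eq_mul_div, le_div_iff₀ hm]
  have hmono := hg.mul_sq_norm_sub_le_inner_of_isConjugateMaximizer hy H H'
  have hcs : ⟪H' - H, y H' - y H⟫ ≤ ‖H' - H‖ * ‖y H' - y H‖ := real_inner_le_norm _ _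
  rcases (norm_nonneg (y H' - y H)).eq_or_lt with h0 | _
  · rw [← h0, zero_mul]
    positivity
  · nlinarith

end Danskin

theorem danskin_strongly_convex_general
    {E : Type*} [NormedAddCommGroup E] [InnerProductSpace ℝ E] [FiniteDimensional ℝ E]
    (m : ℝ) (hm : 0 < m) (g : E → ℝ)
    (hgconv : StrongConvexOn Set.univ m g)
    (y : E → E)
    (hy : ∀ H : E, ∀ J : E, ⟪H, J⟫ - g J ≤ ⟪H, y H⟫ - g (y H)) :
    ConvexOn ℝ Set.univ (fun H : E => ⟪H, y H⟫ - g (y H)) ∧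
      ∀ H : E, HasGradientAt (fun H' : E => ⟪H', y H'⟫ - g (y H')) (y H) H :=
  have hy : IsConjugateMaximizer g y := hy
  ⟨hy.convexOn_conjugateValue, fun _ =>
    hy.hasGradientAt_conjugateValue
      (hgconv.lipschitzWith_of_isConjugateMaximizer hm hy).continuous.continuousAt⟩

/-- Danskin-type theorem for strongly convex inner problems: the value
function `φ(H) = ⟪H, y(H)⟫ − g(y(H))` of the maximization of `J ↦ ⟪H, J⟫ − g(J)` is
convex and has gradient `y(H)` at every `H`. -/
theorem danskin_strongly_convex
    {E : Type*} [NormedAddCommGroup E] [InnerProductSpace ℝ E] [FiniteDimensional ℝ E]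
    (m : ℝ) (hm : 0 < m) (g : E → ℝ) (hgcont : Continuous g)
    (hgconv : StrongConvexOn Set.univ m g)
    (y : E → E)
    (hy : ∀ H : E, ∀ J : E, ⟪H, J⟫ - g J ≤ ⟪H, y H⟫ - g (y H)) :
    ConvexOn ℝ Set.univ (fun H : E => ⟪H, y H⟫ - g (y H)) ∧
      ∀ H : E, HasGradientAt (fun H' : E => ⟪H', y H'⟫ - g (y H')) (y H) H :=
  danskin_strongly_convex_general m hm g hgconv y hy
end

section
/- (Assertion 1: forward hysteresis operator as gradient of the co-energy density.) Let E be a finite-dimensional real inner product space, let μ₀ > 0, m > 0, χ ≥ 0, J_p ∈ E, and let U : E → ℝ be continuous and m-strongly convex. For H ∈ E let J(H) denote the unique minimizer of J ↦ U(J) − ⟪H, J⟫ + χ‖J − J_p‖, and define the co-energy density w_*(H) = (μ₀/2)‖H‖² − inf_{J ∈ E} ( U(J) − ⟪H, J⟫ + χ‖J − J_p‖ ). Then for every H ∈ E, w_* has a gradient at H equal to μ₀·H + J(H), i.e., HasGradientAt w_* (μ₀ • H + J H) H. -/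
open RealInnerProductSpace

set_option maxHeartbeats 1000000 in
open Filter Asymptotics in
/-- Assertion 1: the forward hysteresis operator `B = μ₀H + J(H; J_p)` is
the gradient of the co-energy density
`w_*(H; J_p) = (μ₀/2)‖H‖² − inf_J (U(J) − ⟪H, J⟫ + χ‖J − J_p‖)`. -/
theorem forward_operator_gradient_of_coenergy
    {E : Type*} [NormedAddCommGroup E] [InnerProductSpace ℝ E] [FiniteDimensional ℝ E]
    (μ₀ m : ℝ) (hμ₀ : 0 < μ₀) (hm : 0 < m)
    (χ : ℝ) (hχ : 0 ≤ χ) (Jp : E)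
    (U : E → ℝ) (hUcont : Continuous U) (hUconv : StrongConvexOn Set.univ m U)
    (Jmap : E → E)
    (hJmap : ∀ H : E, ∀ J : E,
      U (Jmap H) - ⟪H, Jmap H⟫ + χ * ‖Jmap H - Jp‖ ≤ U J - ⟪H, J⟫ + χ * ‖J - Jp‖) :
    ∀ H : E, HasGradientAt
      (fun H' : E => μ₀ / 2 * ‖H'‖ ^ 2 - (⨅ J : E, (U J - ⟪H', J⟫ + χ * ‖J - Jp‖)))
      (μ₀ • H + Jmap H) H := by
  set F : E → E → ℝ := fun H' J => U J - ⟪H', J⟫ + χ * ‖J - Jp‖ with hF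
  -- quadratic growth at the minimizer
  have hquad : ∀ H' y : E, F H' (Jmap H') + m / 2 * ‖y - Jmap H'‖ ^ 2 ≤ F H' y := by
    intro H' y
    set a := Jmap H' with ha
    have key : ∀ t : ℝ, t ∈ Set.Ioo (0 : ℝ) 1 →
        t * (m / 2 * ‖a - y‖ ^ 2) ≤ F H' y - F H' a := by
      intro t ht
      have h1 : U (t • a + (1 - t) • y)
          ≤ t * U a + (1 - t) * U y - t * (1 - t) * (m / 2 * ‖a - y‖ ^ 2) := by
        have := hUconv.2 (Set.mem_univ a) (Set.mem_univ y) ht.1.le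
          (by linarith [ht.2] : (0:ℝ) ≤ 1 - t) (by ring)
        simpa using this
      have h2 : F H' a ≤ F H' (t • a + (1 - t) • y) := hJmap H' _
      have h3 : ⟪H', t • a + (1 - t) • y⟫ = t * ⟪H', a⟫ + (1 - t) * ⟪H', y⟫ := by
        simp [inner_add_right, inner_smul_right]
      have h4 : ‖(t • a + (1 - t) • y) - Jp‖ ≤ t * ‖a - Jp‖ + (1 - t) * ‖y - Jp‖ := by
        have he : (t • a + (1 - t) • y) - Jp = t • (a - Jp) + (1 - t) • (y - Jp) := by
          module
        calc ‖(t • a + (1 - t) • y) - Jp‖ = ‖t • (a - Jp) + (1 - t) • (y - Jp)‖ := by rw [he]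
          _ ≤ ‖t • (a - Jp)‖ + ‖(1 - t) • (y - Jp)‖ := norm_add_le _ _
          _ = t * ‖a - Jp‖ + (1 - t) * ‖y - Jp‖ := by
              rw [norm_smul, norm_smul, Real.norm_eq_abs, Real.norm_eq_abs,
                abs_of_nonneg ht.1.le, abs_of_nonneg (by linarith [ht.2] : (0:ℝ) ≤ 1 - t)]
      have h5 : F H' (t • a + (1 - t) • y)
          ≤ t * F H' a + (1 - t) * F H' y - t * (1 - t) * (m / 2 * ‖a - y‖ ^ 2) := by
        simp only [hF]
        rw [h3]
        have := mul_le_mul_of_nonneg_left h4 hχ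
        nlinarith [h1]
      have ht1 : 0 < 1 - t := by linarith [ht.2]
      have h6 : (1 - t) * (t * (m / 2 * ‖a - y‖ ^ 2)) ≤ (1 - t) * (F H' y - F H' a) := by
        nlinarith [h2.trans h5]
      exact le_of_mul_le_mul_left h6 ht1
    have hlim : Tendsto (fun t : ℝ => t * (m / 2 * ‖a - y‖ ^ 2)) (nhdsWithin 1 (Set.Iio 1))
        (nhds (m / 2 * ‖a - y‖ ^ 2)) := by
      have h0 : Filter.Tendsto (fun t : ℝ => t * (m / 2 * ‖a - y‖ ^ 2)) (nhds 1)
          (nhds (1 * (m / 2 * ‖a - y‖ ^ 2))) := tendsto_id.mul_const _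
      simpa using h0.mono_left nhdsWithin_le_nhds
    have hle : m / 2 * ‖a - y‖ ^ 2 ≤ F H' y - F H' a := by
      refine le_of_tendsto hlim ?_
      filter_upwards [Ioo_mem_nhdsLT_of_mem (by norm_num : (1:ℝ) ∈ Set.Ioc 0 1)] with t ht
      exact key t ht
    rw [norm_sub_rev] at hle
    linarith
  -- identification of the infimum
  have hinf : ∀ H' : E, (⨅ J : E, F H' J) = F H' (Jmap H') := by
    intro H'
    refine le_antisymm (ciInf_le ⟨F H' (Jmap H'), ?_⟩ (Jmap H')) (le_ciInf (hJmap H'))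
    rintro r ⟨J, rfl⟩
    exact hJmap H' J
  have hfun : ∀ H' : E, (⨅ J : E, (U J - ⟪H', J⟫ + χ * ‖J - Jp‖)) = F H' (Jmap H') :=
    hinf
  clear_value F
  intro H
  rw [hasGradientAt_iff_isLittleO]
  -- the remainder bound
  set a := Jmap H with ha
  clear_value a
  have hbound : ∀ H' : E,
      |(μ₀ / 2 * ‖H'‖ ^ 2 - F H' (Jmap H')) - (μ₀ / 2 * ‖H‖ ^ 2 - F H a)
        - ⟪μ₀ • H + a, H' - H⟫| ≤ (μ₀ / 2 + 1 / m) * ‖H' - H‖ ^ 2 := by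
    intro H'
    set b := Jmap H' with hb
    clear_value b
    -- Lipschitz estimate
    have hL : ⟪H' - H, b - a⟫ ≤ 1 / m * ‖H' - H‖ ^ 2 := by
      have h1 := hquad H b
      have h2 := hquad H' a
      rw [← ha] at h1
      rw [← hb] at h2
      have e1 : F H b - F H' b = ⟪H' - H, b⟫ := by
        simp only [hF, inner_sub_left]; ring
      have e2 : F H' a - F H a = -⟪H' - H, a⟫ := by
        simp only [hF, inner_sub_left]; ring
      have e3 : ⟪H' - H, b - a⟫ = ⟪H' - H, b⟫ - ⟪H' - H, a⟫ := inner_sub_right _ _ _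
      have hsym : ‖a - b‖ ^ 2 = ‖b - a‖ ^ 2 := by rw [norm_sub_rev]
      rw [hsym] at h2
      have hcs : ⟪H' - H, b - a⟫ ≤ ‖H' - H‖ * ‖b - a‖ := real_inner_le_norm _ _
      have hmono : m * ‖b - a‖ ^ 2 ≤ ⟪H' - H, b - a⟫ := by
        nlinarith [h1, h2, e1, e2, e3]
      have hlip : m * ‖b - a‖ ≤ ‖H' - H‖ := by
        rcases eq_or_lt_of_le (norm_nonneg (b - a)) with h0 | h0
        · rw [← h0]; simpa using norm_nonneg (H' - H)
        · have := le_trans hmono hcs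
          rw [sq] at this
          nlinarith
      calc ⟪H' - H, b - a⟫ ≤ ‖H' - H‖ * ‖b - a‖ := hcs
        _ ≤ 1 / m * ‖H' - H‖ ^ 2 := by
            rw [div_mul_eq_mul_div, le_div_iff₀ hm, sq]
            nlinarith [norm_nonneg (H' - H)]
    -- quadratic part
    have hq : μ₀ / 2 * ‖H'‖ ^ 2 - μ₀ / 2 * ‖H‖ ^ 2 - μ₀ * ⟪H, H' - H⟫
        = μ₀ / 2 * ‖H' - H‖ ^ 2 := by
      have : ‖H'‖ ^ 2 = ‖H' - H‖ ^ 2 + 2 * ⟪H' - H, H⟫ + ‖H‖ ^ 2 := by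
        have := norm_add_sq_real (H' - H) H
        simpa using this
      have hcomm : ⟪H, H' - H⟫ = ⟪H' - H, H⟫ := real_inner_comm _ _
      linear_combination μ₀ / 2 * this - μ₀ * hcomm
    -- g part bounds
    have hg_lo : 0 ≤ (-(F H' b)) - (-(F H a)) - ⟪H' - H, a⟫ := by
      have h1 : F H' b ≤ F H' a := by rw [hb]; simp only [hF]; exact hJmap H' a
      have e2 : F H' a - F H a = -⟪H' - H, a⟫ := by
        simp only [hF, inner_sub_left]; ring
      linarith
    have hg_hi : (-(F H' b)) - (-(F H a)) - ⟪H' - H, a⟫ ≤ ⟪H' - H, b - a⟫ := by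
      have h1 : F H a ≤ F H b := by rw [ha]; simp only [hF]; exact hJmap H b
      have e1 : F H b - F H' b = ⟪H' - H, b⟫ := by
        simp only [hF, inner_sub_left]; ring
      have e3 : ⟪H' - H, b - a⟫ = ⟪H' - H, b⟫ - ⟪H' - H, a⟫ := inner_sub_right _ _ _
      linarith
    have hip : ⟪μ₀ • H + a, H' - H⟫ = μ₀ * ⟪H, H' - H⟫ + ⟪H' - H, a⟫ := by
      rw [inner_add_left, inner_smul_left, real_inner_comm a (H' - H)]
      norm_num
    have h1m : 0 ≤ 1 / m * ‖H' - H‖ ^ 2 :=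
      mul_nonneg (by positivity) (sq_nonneg _)
    have hμS : 0 ≤ μ₀ * ‖H' - H‖ ^ 2 := mul_nonneg hμ₀.le (sq_nonneg _)
    rw [abs_le]
    constructor
    · rw [hip]
      linarith [hg_lo, hq, h1m, hμS]
    · rw [hip]
      linarith [hg_hi, hL, hq, h1m, hμS]
  have hO : (fun H' : E => (μ₀ / 2 * ‖H'‖ ^ 2 - (⨅ J : E, (U J - ⟪H', J⟫ + χ * ‖J - Jp‖)))
      - (μ₀ / 2 * ‖H‖ ^ 2 - (⨅ J : E, (U J - ⟪H, J⟫ + χ * ‖J - Jp‖)))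
      - ⟪μ₀ • H + a, H' - H⟫) =O[nhds H] fun H' => ‖H' - H‖ ^ 2 := by
    refine IsBigO.of_bound (μ₀ / 2 + 1 / m) (Eventually.of_forall fun H' => ?_)
    rw [hfun H', hfun H, ← ha]
    calc _ ≤ (μ₀ / 2 + 1 / m) * ‖H' - H‖ ^ 2 := by
            simpa [Real.norm_eq_abs] using hbound H'
      _ ≤ _ := by
            rw [Real.norm_eq_abs, abs_of_nonneg (sq_nonneg _)]
  have ho : (fun H' : E => ‖H' - H‖ ^ 2) =o[nhds H] fun H' => H' - H := by
    rw [isLittleO_iff]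
    intro c hc
    filter_upwards [Metric.ball_mem_nhds H hc] with H' hH'
    have hd : ‖H' - H‖ < c := by rwa [Metric.mem_ball, dist_eq_norm] at hH'
    rw [Real.norm_eq_abs, abs_of_nonneg (sq_nonneg _), sq]
    exact mul_le_mul_of_nonneg_right hd.le (norm_nonneg _)
  exact hO.trans_isLittleO ho
end

section
/- Let E be a finite-dimensional real inner product space, let m > 0, χ ≥ 0, J_p ∈ E, and let U : E → ℝ be continuous and m-strongly convex. For H ∈ E let J(H) denote the unique minimizer of J ↦ U(J) − ⟪H, J⟫ + χ‖J − J_p‖. Then the polarization map H ↦ J(H) is Lipschitz continuous with constant 1/m: for all H₁, H₂ ∈ E, ‖J(H₁) − J(H₂)‖ ≤ (1/m)‖H₁ − H₂‖. -/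
open RealInnerProductSpace

private lemma aux_convex {E : Type*} [NormedAddCommGroup E] [InnerProductSpace ℝ E]
    (χ : ℝ) (hχ : 0 ≤ χ) (Jp H : E) :
    ConvexOn ℝ Set.univ (fun J : E => -⟪H, J⟫ + χ * ‖J - Jp‖) := by
  refine ⟨convex_univ, fun x _ y _ a b ha hb hab => ?_⟩
  have h1 : ⟪H, a • x + b • y⟫ = a * ⟪H, x⟫ + b * ⟪H, y⟫ := by
    rw [inner_add_right, real_inner_smul_right, real_inner_smul_right]
  have h2 : ‖a • x + b • y - Jp‖ ≤ a * ‖x - Jp‖ + b * ‖y - Jp‖ := by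
    have heq : a • x + b • y - Jp = a • (x - Jp) + b • (y - Jp) := by
      calc a • x + b • y - Jp = a • x + b • y - (a + b) • Jp := by rw [hab, one_smul]
        _ = a • (x - Jp) + b • (y - Jp) := by rw [add_smul, smul_sub, smul_sub]; abel
    rw [heq]
    calc ‖a • (x - Jp) + b • (y - Jp)‖ ≤ ‖a • (x - Jp)‖ + ‖b • (y - Jp)‖ := norm_add_le _ _
      _ = a * ‖x - Jp‖ + b * ‖y - Jp‖ := by
          rw [norm_smul, norm_smul, Real.norm_eq_abs, Real.norm_eq_abs, abs_of_nonneg ha,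
            abs_of_nonneg hb]
  simp only [smul_eq_mul, h1]
  have := mul_le_mul_of_nonneg_left h2 hχ
  nlinarith [this]

private lemma aux_growth {E : Type*} [NormedAddCommGroup E] [InnerProductSpace ℝ E]
    (m : ℝ) (hm : 0 < m) (f : E → ℝ)
    (hf : StrongConvexOn Set.univ m f) (x : E) (hx : ∀ y, f x ≤ f y) (y : E) :
    f x + m / 2 * ‖y - x‖ ^ 2 ≤ f y := by
  set c : ℝ := m / 2 * ‖x - y‖ ^ 2 with hc
  have hc0 : 0 ≤ c := by positivity
  have hK : 0 ≤ f y - f x := by linarith [hx y]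
  have key : ∀ t : ℝ, 0 < t → t < 1 → (1 - t) * c ≤ f y - f x := by
    intro t ht ht1
    have h := hf.2 (Set.mem_univ x) (Set.mem_univ y)
      (by linarith : (0:ℝ) ≤ 1 - t) ht.le (by ring)
    have h2 := hx ((1 - t) • x + t • y)
    simp only [smul_eq_mul] at h
    rw [← hc] at h
    have h3 : t * ((1 - t) * c) ≤ t * (f y - f x) := by nlinarith [h, h2]
    exact le_of_mul_le_mul_left h3 ht
  have hcK : c ≤ f y - f x := by
    by_contra hcon
    push_neg at hcon
    set K : ℝ := f y - f x with hKdef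
    have hcpos : 0 < c := lt_of_le_of_lt hK hcon
    have ht1 : (c - K) / (2 * c) < 1 := by
      rw [div_lt_one (by positivity)]; nlinarith
    have h := key ((c - K) / (2 * c)) (div_pos (by linarith) (by positivity)) ht1
    have htc : (c - K) / (2 * c) * c = (c - K) / 2 := by
      field_simp
    nlinarith [h, htc]
  have hrev : ‖y - x‖ = ‖x - y‖ := norm_sub_rev _ _
  rw [hrev]
  linarith

/-- the polarization map `H ↦ J(H; J_p)` is Lipschitz continuous with
constant `1/m`. -/
theorem polarization_map_lipschitz
    {E : Type*} [NormedAddCommGroup E] [InnerProductSpace ℝ E] [FiniteDimensional ℝ E]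
    (m : ℝ) (hm : 0 < m) (χ : ℝ) (hχ : 0 ≤ χ) (Jp : E)
    (U : E → ℝ) (hUcont : Continuous U) (hUconv : StrongConvexOn Set.univ m U)
    (Jmap : E → E)
    (hJmap : ∀ H : E, ∀ J : E,
      U (Jmap H) - ⟪H, Jmap H⟫ + χ * ‖Jmap H - Jp‖ ≤ U J - ⟪H, J⟫ + χ * ‖J - Jp‖) :
    ∀ H₁ H₂ : E, ‖Jmap H₁ - Jmap H₂‖ ≤ (1 / m) * ‖H₁ - H₂‖ := by
  have hF : ∀ H : E, StrongConvexOn Set.univ m (fun J : E => U J - ⟪H, J⟫ + χ * ‖J - Jp‖) := by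
    intro H
    have h := hUconv.add ((aux_convex χ hχ Jp H).uniformConvexOn_zero)
    have h2 : (fun J : E => U J - ⟪H, J⟫ + χ * ‖J - Jp‖)
        = (U + fun J : E => -⟪H, J⟫ + χ * ‖J - Jp‖) := by
      funext J; simp [Pi.add_apply]; ring
    rw [StrongConvexOn, h2]
    have h3 : ((fun r : ℝ => m / 2 * r ^ 2) + 0) = (fun r : ℝ => m / 2 * r ^ 2) := by
      funext r; simp
    rw [← h3]
    exact h
  intro H₁ H₂
  set x := Jmap H₁ with hxdef
  set y := Jmap H₂ with hydef
  have g1 := aux_growth m hm _ (hF H₁) x (hJmap H₁) y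
  have g2 := aux_growth m hm _ (hF H₂) y (hJmap H₂) x
  have hrev : ‖y - x‖ = ‖x - y‖ := norm_sub_rev _ _
  have hip : ⟪H₁ - H₂, x - y⟫ = ⟪H₁, x⟫ - ⟪H₁, y⟫ - ⟪H₂, x⟫ + ⟪H₂, y⟫ := by
    rw [inner_sub_left, inner_sub_right, inner_sub_right]; ring
  have hcs : ⟪H₁ - H₂, x - y⟫ ≤ ‖H₁ - H₂‖ * ‖x - y‖ := real_inner_le_norm _ _
  have hmain : m * ‖x - y‖ ^ 2 ≤ ‖H₁ - H₂‖ * ‖x - y‖ := by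
    rw [hrev] at g1
    nlinarith [g1, g2, hcs, hip]
  rcases eq_or_lt_of_le (norm_nonneg (x - y)) with h0 | h0
  · rw [← h0]; positivity
  · rw [div_mul_eq_mul_div, le_div_iff₀ hm]
    nlinarith [hmain, h0]
end

section
/- (Conjugate of a quadratic-plus-conjugate is an infimal convolution.) Let E be a finite-dimensional real inner product space, let μ₀ > 0, m > 0, and let g : E → ℝ be continuous and m-strongly convex. Define g*(H) = sup_{J ∈ E} ( ⟪H, J⟫ − g(J) ) (which is finite for every H by strong convexity of g). Then for every B ∈ E, sup_{H ∈ E} ( ⟪H, B⟫ − (μ₀/2)‖H‖² − g*(H) ) = inf_{J ∈ E} ( (1/(2μ₀))‖B − J‖² + g(J) ). -/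
open RealInnerProductSpace

section Aux

variable {E : Type*} [NormedAddCommGroup E] [InnerProductSpace ℝ E] [FiniteDimensional ℝ E]

/-- A strongly convex continuous function has a quadratic lower bound. -/
lemma aux_quad_lower_bound (m : ℝ) (hm : 0 < m) (g : E → ℝ) (hgcont : Continuous g)
    (hgconv : StrongConvexOn Set.univ m g) :
    ∃ a : ℝ, 0 ≤ a ∧ ∀ x : E, m / 2 * ‖x‖ ^ 2 - a * (‖x‖ + 1) ≤ g x := by
  obtain ⟨z, hz, hzmin'⟩ := (isCompact_closedBall (0 : E) 1).exists_isMinOn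
    ⟨0, by simp⟩ hgcont.continuousOn
  have hzmin := isMinOn_iff.mp hzmin'
  set c₀ := g z with hc₀
  set g0 := g 0 with hg0
  refine ⟨m / 2 + |c₀| + |g0|, by positivity, fun x => ?_⟩
  rcases le_or_gt ‖x‖ 1 with hx | hx
  · have h1 : c₀ ≤ g x := hzmin x (by simpa [Metric.mem_closedBall] using hx)
    have h2 : -|c₀| ≤ c₀ := neg_abs_le _
    have h3 : (0:ℝ) ≤ |g0| := abs_nonneg _
    have h4 : (0:ℝ) ≤ ‖x‖ := norm_nonneg _
    have h5 : ‖x‖ ^ 2 ≤ 1 := by nlinarith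
    have h6 : m / 2 * ‖x‖ ^ 2 ≤ m / 2 :=
      le_trans (mul_le_mul_of_nonneg_left h5 (by positivity)) (by linarith)
    nlinarith [mul_nonneg (abs_nonneg c₀) h4, mul_nonneg (abs_nonneg g0) h4,
      mul_nonneg (le_of_lt (half_pos hm)) h4]
  · set r := ‖x‖ with hr
    have hr1 : 1 < r := hx
    have hrpos : 0 < r := by linarith
    have key := hgconv.2 (Set.mem_univ x) (Set.mem_univ (0 : E))
      (show (0:ℝ) ≤ 1 / r by positivity)
      (show (0:ℝ) ≤ 1 - 1 / r by
        rw [sub_nonneg, div_le_one hrpos]; linarith)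
      (show (1:ℝ) / r + (1 - 1 / r) = 1 by ring)
    simp only [smul_zero, add_zero, sub_zero, smul_eq_mul] at key
    have hmem : (1 / r) • x ∈ Metric.closedBall (0 : E) 1 := by
      rw [Metric.mem_closedBall, dist_zero_right, norm_smul, Real.norm_eq_abs,
        abs_of_pos (by positivity : (0:ℝ) < 1 / r), ← hr, one_div,
        inv_mul_cancel₀ hrpos.ne']
    have h1 : c₀ ≤ (1 / r) * g x + (1 - 1 / r) * g0 - (1 / r) * (1 - 1 / r) * (m / 2 * r ^ 2) :=
      le_trans (hzmin _ hmem) key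
    have h2 : r * c₀ ≤ g x + (r - 1) * g0 - m / 2 * (r ^ 2 - r) := by
      have hmul := mul_le_mul_of_nonneg_left h1 hrpos.le
      calc r * c₀ ≤ r * ((1 / r) * g x + (1 - 1 / r) * g0
            - (1 / r) * (1 - 1 / r) * (m / 2 * r ^ 2)) := hmul
        _ = g x + (r - 1) * g0 - m / 2 * (r ^ 2 - r) := by
            field_simp
    have h4 : -|c₀| ≤ c₀ := neg_abs_le _
    have h5 : -|g0| ≤ g0 := neg_abs_le _
    have h6 : g0 ≤ |g0| := le_abs_self _
    nlinarith [mul_le_mul_of_nonneg_left h4 hrpos.le,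
      mul_le_mul_of_nonneg_left h5 (by linarith : (0:ℝ) ≤ r - 1),
      mul_le_mul_of_nonneg_left h6 (by linarith : (0:ℝ) ≤ r - 1),
      mul_nonneg (le_of_lt (half_pos hm)) hrpos.le,
      abs_nonneg c₀, abs_nonneg g0, hm.le]

end Aux

set_option maxHeartbeats 1000000 in
/-- the convex conjugate of `H ↦ (μ₀/2)‖H‖² + g*(H)` is the infimal
convolution (Moreau envelope) `B ↦ inf_J ((1/(2μ₀))‖B − J‖² + g(J))`. -/
theorem conjugate_of_quadratic_plus_conjugate_is_moreau_envelope
    {E : Type*} [NormedAddCommGroup E] [InnerProductSpace ℝ E] [FiniteDimensional ℝ E]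
    (μ₀ m : ℝ) (hμ₀ : 0 < μ₀) (hm : 0 < m)
    (g : E → ℝ) (hgcont : Continuous g) (hgconv : StrongConvexOn Set.univ m g) :
    ∀ B : E,
      (⨆ H : E, (⟪H, B⟫ - μ₀ / 2 * ‖H‖ ^ 2 - (⨆ J : E, (⟪H, J⟫ - g J))))
        = ⨅ J : E, (1 / (2 * μ₀) * ‖B - J‖ ^ 2 + g J) := by
  intro B
  obtain ⟨a, ha, hlow⟩ := aux_quad_lower_bound m hm g hgcont hgconv
  have hconvex : ConvexOn ℝ Set.univ g :=
    hgconv.convexOn fun r => by dsimp; positivity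
  -- global lower bound for g
  have hgbelow : ∀ x : E, -(a ^ 2 / (2 * m)) - a ≤ g x := by
    intro x
    have h1 := hlow x
    have h0 : (0:ℝ) ≤ ‖x‖ := norm_nonneg _
    have h2 : m / 2 * ‖x‖ ^ 2 - a * ‖x‖ + a ^ 2 / (2 * m)
        = (m * ‖x‖ - a) ^ 2 / (2 * m) := by field_simp; ring
    nlinarith [div_nonneg (sq_nonneg (m * ‖x‖ - a)) (by positivity : (0:ℝ) ≤ 2 * m)]
  set cmin : ℝ := -(a ^ 2 / (2 * m)) - a with hcmin
  have hcmin_le : ∀ x : E, cmin ≤ g x := hgbelow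
  clear_value cmin
  -- the conjugate of g
  set G : E → ℝ := fun H => ⨆ J : E, (⟪H, J⟫ - g J) with hG
  have hGbdd : ∀ H : E, BddAbove (Set.range fun J : E => (⟪H, J⟫ - g J)) := by
    intro H
    refine ⟨(‖H‖ + a) ^ 2 / (2 * m) + a, ?_⟩
    rintro _ ⟨J, rfl⟩
    show ⟪H, J⟫ - g J ≤ (‖H‖ + a) ^ 2 / (2 * m) + a
    have h1 : ⟪H, J⟫ ≤ ‖H‖ * ‖J‖ := real_inner_le_norm H J
    have h2 := hlow J
    have hq : (‖H‖ + a) * ‖J‖ - m / 2 * ‖J‖ ^ 2 ≤ (‖H‖ + a) ^ 2 / (2 * m) := by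
      rw [← sub_nonneg]
      have hid : (‖H‖ + a) ^ 2 / (2 * m) - ((‖H‖ + a) * ‖J‖ - m / 2 * ‖J‖ ^ 2)
          = (m * ‖J‖ - (‖H‖ + a)) ^ 2 / (2 * m) := by field_simp; ring
      rw [hid]; positivity
    linarith only [h1, h2, hq]
  have hGle : ∀ (H J : E), ⟪H, J⟫ - g J ≤ G H := fun H J =>
    le_ciSup (hGbdd H) J
  -- pointwise inequality : every sup-term is ≤ every inf-term
  have hpoint : ∀ (H J : E),
      ⟪H, B⟫ - μ₀ / 2 * ‖H‖ ^ 2 - G H ≤ 1 / (2 * μ₀) * ‖B - J‖ ^ 2 + g J := by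
    intro H J
    have h1 := hGle H J
    have h2 : ⟪H, B⟫ - ⟪H, J⟫ = ⟪H, B - J⟫ := (inner_sub_right H B J).symm
    have h3 : ⟪H, B - J⟫ ≤ ‖H‖ * ‖B - J‖ := real_inner_le_norm _ _
    have h4 : ‖H‖ * ‖B - J‖ ≤ μ₀ / 2 * ‖H‖ ^ 2 + 1 / (2 * μ₀) * ‖B - J‖ ^ 2 := by
      rw [← sub_nonneg]
      have h5 : μ₀ / 2 * ‖H‖ ^ 2 + 1 / (2 * μ₀) * ‖B - J‖ ^ 2 - ‖H‖ * ‖B - J‖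
          = (μ₀ * ‖H‖ - ‖B - J‖) ^ 2 / (2 * μ₀) := by field_simp; ring
      rw [h5]; positivity
    linarith
  -- boundedness of the two outer families
  have hinfbdd : BddBelow (Set.range fun J : E => 1 / (2 * μ₀) * ‖B - J‖ ^ 2 + g J) := by
    refine ⟨cmin, ?_⟩
    rintro _ ⟨J, rfl⟩
    show cmin ≤ 1 / (2 * μ₀) * ‖B - J‖ ^ 2 + g J
    have h1 := hgbelow J
    have h2 : (0:ℝ) ≤ 1 / (2 * μ₀) * ‖B - J‖ ^ 2 := by positivity
    linarith only [h1, h2]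
  have hsupbdd : BddAbove (Set.range fun H : E =>
      ⟪H, B⟫ - μ₀ / 2 * ‖H‖ ^ 2 - G H) := by
    refine ⟨1 / (2 * μ₀) * ‖B - B‖ ^ 2 + g B, ?_⟩
    rintro _ ⟨H, rfl⟩
    exact hpoint H B
  -- existence of the proximal minimizer
  set φ : E → ℝ := fun J => 1 / (2 * μ₀) * ‖B - J‖ ^ 2 + g J with hφ
  have hφcont : Continuous φ :=
    (continuous_const.mul ((continuous_const.sub continuous_id).norm.pow 2)).add hgcont
  have hgBc : 0 < g B - cmin + 1 := by have h := hgbelow B; linarith only [h]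
  set R : ℝ := Real.sqrt (2 * μ₀ * (g B - cmin + 1)) with hR
  have hR0 : 0 ≤ R := Real.sqrt_nonneg _
  have hRsq : R ^ 2 = 2 * μ₀ * (g B - cmin + 1) := by
    rw [hR, Real.sq_sqrt (le_of_lt (mul_pos (by linarith) hgBc))]
  have hBmem : B ∈ Metric.closedBall B R := by
    simpa [Metric.mem_closedBall] using hR0
  clear_value R
  obtain ⟨Js, hJsmem, hJsmin'⟩ := (isCompact_closedBall B R).exists_isMinOn
    ⟨B, hBmem⟩ hφcont.continuousOn
  have hJsmin := isMinOn_iff.mp hJsmin'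
  have hφB : φ B = g B := by simp [hφ]
  have hJsglobal : ∀ J : E, φ Js ≤ φ J := by
    intro J
    rcases le_or_gt (dist J B) R with hJ | hJ
    · exact hJsmin J (Metric.mem_closedBall.mpr hJ)
    · have h1 : φ Js ≤ g B := le_of_le_of_eq (hJsmin B hBmem) hφB
      have h2 : ‖B - J‖ = dist J B := by rw [dist_eq_norm, ← norm_neg]; congr 1; abel
      have h3 : R ^ 2 ≤ ‖B - J‖ ^ 2 := by
        rw [h2]; exact pow_le_pow_left₀ hR0 hJ.le 2
      have h4 : g B + 1 ≤ φ J := by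
        have h5 : 1 / (2 * μ₀) * R ^ 2 ≤ 1 / (2 * μ₀) * ‖B - J‖ ^ 2 :=
          mul_le_mul_of_nonneg_left h3 (by positivity)
        have h6 : 1 / (2 * μ₀) * R ^ 2 = g B - cmin + 1 := by
          rw [hRsq]; field_simp
        have h7 := hgbelow J
        show g B + 1 ≤ 1 / (2 * μ₀) * ‖B - J‖ ^ 2 + g J
        linarith only [h5, h6, h7]
      linarith
  -- first-order optimality of Js
  set Hs : E := (μ₀)⁻¹ • (B - Js) with hHs
  have hopt : ∀ J : E, ⟪Hs, J - Js⟫ ≤ g J - g Js := by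
    intro J
    apply le_of_forall_pos_le_add
    intro ε hε
    set d : E := J - Js with hd
    set q : ℝ := μ₀⁻¹ * ‖d‖ ^ 2 / 2 with hqdef
    have hqnn : 0 ≤ q := by rw [hqdef]; positivity
    set t : ℝ := min 1 (ε / (q + 1)) with ht
    have ht0 : 0 < t := lt_min one_pos (by positivity)
    have ht1 : t ≤ 1 := min_le_left _ _
    have htmin : t ≤ ε / (q + 1) := min_le_right _ _
    clear_value t
    have hcomb := hconvex.2 (Set.mem_univ J) (Set.mem_univ Js)
      (le_of_lt ht0) (by linarith : (0:ℝ) ≤ 1 - t) (by ring)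
    have hpt : Js + t • d = t • J + (1 - t) • Js := by
      rw [hd]; module
    have hφineq : φ Js ≤ φ (Js + t • d) := hJsglobal (Js + t • d)
    have hnorm : ‖B - (Js + t • d)‖ ^ 2
        = ‖B - Js‖ ^ 2 - 2 * t * ⟪B - Js, d⟫ + t ^ 2 * ‖d‖ ^ 2 := by
      have hrw : B - (Js + t • d) = (B - Js) - t • d := by abel
      rw [hrw, @norm_sub_sq_real, norm_smul, real_inner_smul_right]
      simp [abs_of_pos ht0]
      ring
    have hgcomb : g (Js + t • d) ≤ t * g J + (1 - t) * g Js := by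
      rw [hpt]; simpa using hcomb
    have hmain : 1 / (2 * μ₀) * ‖B - Js‖ ^ 2 + g Js
        ≤ 1 / (2 * μ₀) * (‖B - Js‖ ^ 2 - 2 * t * ⟪B - Js, d⟫ + t ^ 2 * ‖d‖ ^ 2)
          + (t * g J + (1 - t) * g Js) := by
      have h := hφineq
      simp only [hφ] at h
      rw [hnorm] at h
      linarith only [h, hgcomb]
    -- divide by t
    have hmain2 : t * (μ₀⁻¹ * ⟪B - Js, d⟫) ≤ t * ((g J - g Js) + t * q) := by
      have hexp : 1 / (2 * μ₀) * (‖B - Js‖ ^ 2 - 2 * t * ⟪B - Js, d⟫ + t ^ 2 * ‖d‖ ^ 2)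
          = 1 / (2 * μ₀) * ‖B - Js‖ ^ 2 - t * (μ₀⁻¹ * ⟪B - Js, d⟫) + t * (t * q) := by
        rw [hqdef]; field_simp
      rw [hexp] at hmain
      linarith only [hmain]
    have hdiv : μ₀⁻¹ * ⟪B - Js, d⟫ ≤ (g J - g Js) + t * q :=
      le_of_mul_le_mul_left hmain2 ht0
    have htq : t * q ≤ ε := by
      have h2 : t * q ≤ (ε / (q + 1)) * q := mul_le_mul_of_nonneg_right htmin hqnn
      have h3 : (ε / (q + 1)) * q ≤ ε := by
        rw [div_mul_eq_mul_div, div_le_iff₀ (by positivity)]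
        nlinarith [hε.le, hqnn]
      linarith
    have hinner : ⟪Hs, J - Js⟫ = μ₀⁻¹ * ⟪B - Js, d⟫ := by
      rw [hHs, real_inner_smul_left, hd]
    rw [hinner]
    linarith
  -- the conjugate value at Hs
  have hGHs : G Hs = ⟪Hs, Js⟫ - g Js := by
    apply le_antisymm
    · apply ciSup_le
      intro J
      have h1 := hopt J
      have h2 : ⟪Hs, J⟫ - ⟪Hs, Js⟫ = ⟪Hs, J - Js⟫ := (inner_sub_right _ _ _).symm
      linarith only [h1, h2.le, h2.ge]
    · exact hGle Hs Js
  -- the sup-term at Hs equals φ Js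
  have hkey : ⟪Hs, B⟫ - μ₀ / 2 * ‖Hs‖ ^ 2 - G Hs = φ Js := by
    rw [hGHs]
    have h1 : ⟪Hs, B⟫ - ⟪Hs, Js⟫ = ⟪Hs, B - Js⟫ := (inner_sub_right _ _ _).symm
    have h2 : ⟪Hs, B - Js⟫ = μ₀⁻¹ * ‖B - Js‖ ^ 2 := by
      rw [hHs, real_inner_smul_left, real_inner_self_eq_norm_sq]
    have h3 : ‖Hs‖ ^ 2 = (μ₀⁻¹) ^ 2 * ‖B - Js‖ ^ 2 := by
      rw [hHs, norm_smul, mul_pow]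
      congr 1
      rw [norm_inv, Real.norm_eq_abs, abs_of_pos hμ₀]
    have hμne : μ₀ ≠ 0 := hμ₀.ne'
    have h4 : ⟪Hs, B⟫ - ⟪Hs, Js⟫ = μ₀⁻¹ * ‖B - Js‖ ^ 2 := by rw [h1, h2]
    show _ = 1 / (2 * μ₀) * ‖B - Js‖ ^ 2 + g Js
    rw [show ⟪Hs, B⟫ - μ₀ / 2 * ‖Hs‖ ^ 2 - (⟪Hs, Js⟫ - g Js)
        = (⟪Hs, B⟫ - ⟪Hs, Js⟫) - μ₀ / 2 * ‖Hs‖ ^ 2 + g Js by ring, h4, h3]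
    field_simp
    ring
  -- conclude
  apply le_antisymm
  · exact ciSup_le fun H => le_ciInf fun J => hpoint H J
  · calc (⨅ J : E, (1 / (2 * μ₀) * ‖B - J‖ ^ 2 + g J)) ≤ φ Js := ciInf_le hinfbdd Js
      _ = ⟪Hs, B⟫ - μ₀ / 2 * ‖Hs‖ ^ 2 - G Hs := hkey.symm
      _ ≤ _ := le_ciSup hsupbdd Hs
end

section
/- (Assertion 2: the energy density is the convex conjugate of the co-energy density.) Let E be a finite-dimensional real inner product space, let μ₀ > 0, m > 0, χ ≥ 0, J_p ∈ E, and let U : E → ℝ be continuous and m-strongly convex. Define the co-energy density w_*(H) = (μ₀/2)‖H‖² − inf_{J ∈ E} ( U(J) − ⟪H, J⟫ + χ‖J − J_p‖ ) and the energy density w(B) = inf_{J ∈ E} ( (1/(2μ₀))‖B − J‖² + U(J) + χ‖J − J_p‖ ). Then for every B ∈ E, w(B) = sup_{H ∈ E} ( ⟪H, B⟫ − w_*(H) ). -/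
open RealInnerProductSpace

/-!
Write `g = U + χ‖· - J_p‖`, an `m`-strongly convex function, so that `w` is the Moreau envelope of
`g` and `w_*(H) = (μ₀/2)‖H‖² + g*(H)`. For every `H` and `J`, Young's inequality
`⟪H, B - J⟫ ≤ (μ₀/2)‖H‖² + ‖B - J‖²/(2μ₀)` gives `⟪H, B⟫ - w_*(H) ≤ w(B)`. Conversely, strong
convexity yields a minimiser `J*` of the envelope problem, and its first-order optimality condition
says that `H* = (B - J*)/μ₀` is a subgradient of `g` at `J*`; hence `J*` also attains the infimum
defining `w_*(H*)`, and `⟪H*, B⟫ - w_*(H*) = w(B)`.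
-/

open Filter Set Topology

section StrongConvexity

variable {E : Type*} [NormedAddCommGroup E] [NormedSpace ℝ E] {s : Set E} {m : ℝ} {f g : E → ℝ}

lemma StrongConvexOn.add_convexOn (hf : StrongConvexOn s m f) (hg : ConvexOn ℝ s g) :
    StrongConvexOn s m (f + g) := by
  simpa [StrongConvexOn] using UniformConvexOn.add hf (uniformConvexOn_zero.2 hg)

lemma ConvexOn.add_strongConvexOn (hf : ConvexOn ℝ s f) (hg : StrongConvexOn s m g) :
    StrongConvexOn s m (f + g) := by
  simpa [StrongConvexOn] using (uniformConvexOn_zero.2 hf).add hg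

lemma StrongConvexOn.sub_concaveOn (hf : StrongConvexOn s m f) (hg : ConcaveOn ℝ s g) :
    StrongConvexOn s m (f - g) := by
  simpa [StrongConvexOn] using UniformConvexOn.sub hf (uniformConcaveOn_zero.2 hg)

lemma StrongConvexOn.le_of_one_le_norm (hf : StrongConvexOn univ m f) {c : ℝ}
    (hc : ∀ z : E, ‖z‖ = 1 → c ≤ f z) {y : E} (hy : 1 ≤ ‖y‖) :
    m / 2 * ‖y‖ ^ 2 + (c - f 0 - m / 2) * ‖y‖ + f 0 ≤ f y := by
  set R := ‖y‖
  -- strong convexity on the segment from `y` to `0`, evaluated at the unit vector `R⁻¹ • y`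
  have hR : 0 < R := by linarith
  have hz : ‖R⁻¹ • y‖ = 1 := by rw [norm_smul, norm_inv, norm_norm, inv_mul_cancel₀ hR.ne']
  have hconv := hf.2 (mem_univ y) (mem_univ 0) (inv_nonneg.2 hR.le)
    (sub_nonneg.2 (inv_le_one_of_one_le₀ hy)) (add_sub_cancel _ _)
  simp only [smul_zero, add_zero, sub_zero, smul_eq_mul] at hconv
  have hc' := mul_le_mul_of_nonneg_left ((hc _ hz).trans hconv) hR.le
  have e : R * (R⁻¹ * f y + (1 - R⁻¹) * f 0 - R⁻¹ * (1 - R⁻¹) * (m / 2 * R ^ 2))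
      = f y + (R - 1) * f 0 - m / 2 * R * (R - 1) := by
    field_simp
  rw [e] at hc'
  linarith

variable [FiniteDimensional ℝ E]

lemma StrongConvexOn.tendsto_cocompact_atTop (hf : StrongConvexOn univ m f) (hm : 0 < m) :
    Tendsto f (cocompact E) atTop := by
  have hcont : Continuous f := (strongConvexOn_zero.1 (hf.mono hm.le)).locallyLipschitz.continuous
  obtain ⟨c, hc⟩ := (isCompact_sphere (0 : E) 1).bddBelow_image hcont.continuousOn
  have hquad : Tendsto (fun r : ℝ => m / 2 * r ^ 2 + (c - f 0 - m / 2) * r + f 0) atTop atTop := by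
    refine (tendsto_atTop_add_const_right _ (f 0) (tendsto_id.atTop_mul_atTop₀
      (tendsto_atTop_add_const_right _ (c - f 0 - m / 2)
        (tendsto_id.const_mul_atTop (half_pos hm))))).congr fun r => ?_
    simp only [id]
    ring
  refine tendsto_atTop_mono' _ ?_ (hquad.comp tendsto_norm_cocompact_atTop)
  filter_upwards [tendsto_norm_cocompact_atTop.eventually_ge_atTop 1] with y hy
  exact hf.le_of_one_le_norm (fun z hz => hc ⟨z, by simpa using hz, rfl⟩) hy

lemma StrongConvexOn.exists_forall_le (hf : StrongConvexOn univ m f) (hm : 0 < m) :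
    ∃ x, ∀ y, f x ≤ f y :=
  (strongConvexOn_zero.1 (hf.mono hm.le)).locallyLipschitz.continuous.exists_forall_le
    (hf.tendsto_cocompact_atTop hm)

end StrongConvexity

section InnerProductSpace

variable {E : Type*} [NormedAddCommGroup E] [InnerProductSpace ℝ E]

lemma convexOn_univ_const_mul_norm_sub {c : ℝ} (hc : 0 ≤ c) (a : E) :
    ConvexOn ℝ univ fun x : E => c * ‖x - a‖ := by
  simpa [dist_eq_norm] using (convexOn_univ_dist a).smul hc

lemma convexOn_univ_const_mul_norm_sub_sq {c : ℝ} (hc : 0 ≤ c) (a : E) :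
    ConvexOn ℝ univ fun x : E => c * ‖a - x‖ ^ 2 := by
  simpa [dist_eq_norm, norm_sub_rev] using
    ((convexOn_univ_dist a).pow (fun _ _ => dist_nonneg) 2).smul hc

lemma real_inner_le_mul_norm_sq_add {μ : ℝ} (hμ : 0 < μ) (x y : E) :
    ⟪x, y⟫ ≤ μ / 2 * ‖x‖ ^ 2 + 1 / (2 * μ) * ‖y‖ ^ 2 := by
  have hsq : 0 ≤ (μ * ‖x‖ - ‖y‖) ^ 2 / (2 * μ) := by positivity
  have e : (μ * ‖x‖ - ‖y‖) ^ 2 / (2 * μ)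
      = μ / 2 * ‖x‖ ^ 2 + 1 / (2 * μ) * ‖y‖ ^ 2 - ‖x‖ * ‖y‖ := by
    field_simp
    ring
  linarith [real_inner_le_norm x y]

variable {μ : ℝ} {g : E → ℝ}

lemma ConvexOn.inner_le_sub_of_forall_le (hg : ConvexOn ℝ univ g) (hμ : 0 < μ) {B x : E}
    (hx : ∀ y, 1 / (2 * μ) * ‖B - x‖ ^ 2 + g x ≤ 1 / (2 * μ) * ‖B - y‖ ^ 2 + g y) (y : E) :
    ⟪μ⁻¹ • (B - x), y - x⟫ ≤ g y - g x := by
  set v := y - x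
  -- compare `x` with the points `x + t • v` of the segment, then let `t → 0⁺`
  have hstep : ∀ t ∈ Ioc (0 : ℝ) 1,
      ⟪μ⁻¹ • (B - x), v⟫ ≤ g y - g x + t * (1 / (2 * μ) * ‖v‖ ^ 2) := by
    rintro t ⟨ht0, ht1⟩
    have hconv := hg.2 (mem_univ x) (mem_univ y) (sub_nonneg.2 ht1) ht0.le (sub_add_cancel 1 t)
    have hmin := hx ((1 - t) • x + t • y)
    have hpt : B - ((1 - t) • x + t • y) = (B - x) - t • v := by
      simp only [v, sub_smul, one_smul, smul_sub]
      abel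
    rw [hpt, norm_sub_sq_real (B - x) (t • v), real_inner_smul_right, norm_smul, Real.norm_eq_abs,
      abs_of_pos ht0] at hmin
    rw [smul_eq_mul, smul_eq_mul] at hconv
    rw [real_inner_smul_left]
    have key : 0 ≤ t * (g y - g x + t * (1 / (2 * μ) * ‖v‖ ^ 2) - μ⁻¹ * ⟪B - x, v⟫) := by
      have e : t * (g y - g x + t * (1 / (2 * μ) * ‖v‖ ^ 2) - μ⁻¹ * ⟪B - x, v⟫)
          = (1 / (2 * μ) * (‖B - x‖ ^ 2 - 2 * (t * ⟪B - x, v⟫) + (t * ‖v‖) ^ 2)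
              + ((1 - t) * g x + t * g y)) - (1 / (2 * μ) * ‖B - x‖ ^ 2 + g x) := by
        field_simp
        ring
      rw [e]
      linarith
    linarith [nonneg_of_mul_nonneg_right key ht0]
  have hlim : Tendsto (fun t : ℝ => g y - g x + t * (1 / (2 * μ) * ‖v‖ ^ 2)) (𝓝[>] 0)
      (𝓝 (g y - g x)) :=
    ((continuous_const.add (continuous_id.mul continuous_const)).tendsto' 0 _
      (by simp)).mono_left nhdsWithin_le_nhds
  exact ge_of_tendsto hlim (eventually_of_mem (Ioc_mem_nhdsGT one_pos) hstep)

end InnerProductSpace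

section Duality

variable {E : Type*} [NormedAddCommGroup E] [InnerProductSpace ℝ E] [FiniteDimensional ℝ E]
  {m μ : ℝ} {g : E → ℝ}

theorem StrongConvexOn.iInf_norm_sub_sq_add_eq_iSup (hg : StrongConvexOn univ m g) (hm : 0 < m)
    (hμ : 0 < μ) (B : E) :
    ⨅ J, (1 / (2 * μ) * ‖B - J‖ ^ 2 + g J)
      = ⨆ H, (⟪H, B⟫ - (μ / 2 * ‖H‖ ^ 2 - ⨅ J, (g J - ⟪H, J⟫))) := by
  have hbdd (H : E) : BddBelow (range fun J => g J - ⟪H, J⟫) :=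
    have ⟨x, hx⟩ := (hg.sub_concaveOn ((innerₛₗ ℝ H).concaveOn convex_univ)).exists_forall_le hm
    ⟨_, forall_mem_range.2 hx⟩
  have hweak (H : E) : ⟪H, B⟫ - (μ / 2 * ‖H‖ ^ 2 - ⨅ J, (g J - ⟪H, J⟫))
      ≤ ⨅ J, (1 / (2 * μ) * ‖B - J‖ ^ 2 + g J) := by
    refine le_ciInf fun J => ?_
    have := real_inner_le_mul_norm_sq_add hμ H (B - J)
    linarith [ciInf_le (hbdd H) J, inner_sub_right (𝕜 := ℝ) H B J]
  obtain ⟨x, hx⟩ : ∃ x, ∀ y, 1 / (2 * μ) * ‖B - x‖ ^ 2 + g x ≤ 1 / (2 * μ) * ‖B - y‖ ^ 2 + g y :=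
    ((convexOn_univ_const_mul_norm_sub_sq (by positivity) B).add_strongConvexOn hg).exists_forall_le
      hm
  set H₀ := μ⁻¹ • (B - x)
  have hsub := (strongConvexOn_zero.1 (hg.mono hm.le)).inner_le_sub_of_forall_le hμ hx
  have hinner : ⨅ J, (g J - ⟪H₀, J⟫) = g x - ⟪H₀, x⟫ :=
    le_antisymm (ciInf_le (hbdd H₀) x)
      (le_ciInf fun J => by linarith [hsub J, inner_sub_right (𝕜 := ℝ) H₀ J x])
  have hvalue : ⟪H₀, B⟫ - (μ / 2 * ‖H₀‖ ^ 2 - (g x - ⟪H₀, x⟫))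
      = 1 / (2 * μ) * ‖B - x‖ ^ 2 + g x := by
    have h1 : ⟪H₀, B⟫ - ⟪H₀, x⟫ = μ⁻¹ * ‖B - x‖ ^ 2 := by
      rw [← inner_sub_right, real_inner_smul_left, real_inner_self_eq_norm_sq]
    have h2 : ‖H₀‖ = μ⁻¹ * ‖B - x‖ := by
      rw [norm_smul, Real.norm_eq_abs, abs_of_pos (inv_pos.2 hμ)]
    have h3 : μ * μ⁻¹ = 1 := mul_inv_cancel₀ hμ.ne'
    rw [h2]
    linear_combination h1 - ‖B - x‖ ^ 2 * μ⁻¹ / 2 * h3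
  refine le_antisymm ?_ (ciSup_le hweak)
  refine le_ciSup_of_le ⟨_, forall_mem_range.2 hweak⟩ H₀ ?_
  rw [hinner, hvalue]
  exact ciInf_le ⟨_, forall_mem_range.2 hx⟩ x

end Duality

theorem energy_density_is_conjugate_of_coenergy_general
    {E : Type*} [NormedAddCommGroup E] [InnerProductSpace ℝ E] [FiniteDimensional ℝ E]
    (μ₀ m : ℝ) (hμ₀ : 0 < μ₀) (hm : 0 < m) (χ : ℝ) (hχ : 0 ≤ χ) (Jp : E)
    (U : E → ℝ) (hUconv : StrongConvexOn Set.univ m U) :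
    ∀ B : E,
      (⨅ J : E, (1 / (2 * μ₀) * ‖B - J‖ ^ 2 + U J + χ * ‖J - Jp‖))
        = ⨆ H : E, (⟪H, B⟫ -
            (μ₀ / 2 * ‖H‖ ^ 2 - (⨅ J : E, (U J - ⟪H, J⟫ + χ * ‖J - Jp‖)))) := by
  intro B
  have hg := hUconv.add_convexOn (convexOn_univ_const_mul_norm_sub hχ Jp)
  simpa only [Pi.add_apply, ← add_assoc, sub_add_eq_add_sub] using
    hg.iInf_norm_sub_sq_add_eq_iSup hm hμ₀ B

/-- Assertion 2: the energy density
`w(B; J_p) = inf_J ((1/(2μ₀))‖B − J‖² + U(J) + χ‖J − J_p‖)` is the convex conjugate of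
the co-energy density `w_*(H; J_p) = (μ₀/2)‖H‖² − inf_J (U(J) − ⟪H, J⟫ + χ‖J − J_p‖)`. -/
theorem energy_density_is_conjugate_of_coenergy
    {E : Type*} [NormedAddCommGroup E] [InnerProductSpace ℝ E] [FiniteDimensional ℝ E]
    (μ₀ m : ℝ) (hμ₀ : 0 < μ₀) (hm : 0 < m) (χ : ℝ) (hχ : 0 ≤ χ) (Jp : E)
    (U : E → ℝ) (hUcont : Continuous U) (hUconv : StrongConvexOn Set.univ m U) :
    ∀ B : E,
      (⨅ J : E, (1 / (2 * μ₀) * ‖B - J‖ ^ 2 + U J + χ * ‖J - Jp‖))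
        = ⨆ H : E, (⟪H, B⟫ -
            (μ₀ / 2 * ‖H‖ ^ 2 - (⨅ J : E, (U J - ⟪H, J⟫ + χ * ‖J - Jp‖)))) :=
  energy_density_is_conjugate_of_coenergy_general μ₀ m hμ₀ hm χ hχ Jp U hUconv
end

section
/- (Gradient of the energy density; inverse hysteresis operator.) Let E be a finite-dimensional real inner product space, let μ₀ > 0, χ ≥ 0, J_p ∈ E, and let U : E → ℝ be convex and continuous. For B ∈ E let J̃(B) denote the unique minimizer of J ↦ (1/(2μ₀))‖B − J‖² + U(J) + χ‖J − J_p‖, and define the energy density w(B) = (1/(2μ₀))‖B − J̃(B)‖² + U(J̃(B)) + χ‖J̃(B) − J_p‖ (the infimum value). Then for every B ∈ E, w has a gradient at B equal to (1/μ₀)(B − J̃(B)), i.e., HasGradientAt w ((1/μ₀) • (B − J̃ B)) B. -/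
/-!
With `c = 1/(2μ₀)` and `φ = U + χ‖· - J_p‖`, the energy density is the Moreau envelope
`e(B) = min_J (c‖B - J‖² + φ J)` of the convex function `φ`. As a partial minimum of a jointly
convex function, `e` is convex. Testing the minimum defining `e(B + h)` with the old minimizer
`J̃ B` gives `e(B + h) ≤ e(B) + 2c⟪B - J̃ B, h⟫ + c‖h‖²`. A convex function lying below a quadratic
that touches it at `B` is differentiable there, since convexity, `2 e(B) ≤ e(B + h) + e(B - h)`,
turns the upper bound at `B - h` into the matching lower bound at `B + h`.
-/

open RealInnerProductSpace Set Asymptotics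

theorem ConvexOn.hasFDerivAt_of_le_quadratic {E : Type*} [NormedAddCommGroup E]
    [NormedSpace ℝ E] {f : E → ℝ} (hf : ConvexOn ℝ univ f) {x : E} (L : E →L[ℝ] ℝ) (C : ℝ)
    (hle : ∀ h, f (x + h) ≤ f x + L h + C * ‖h‖ ^ 2) : HasFDerivAt f L x := by
  have hmid : ∀ h, f x ≤ (1 / 2) * f (x + h) + (1 / 2) * f (x - h) := fun h => by
    have hx : (1 / 2 : ℝ) • (x + h) + (1 / 2 : ℝ) • (x - h) = x := by module
    simpa only [hx, smul_eq_mul] using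
      hf.2 (mem_univ (x + h)) (mem_univ (x - h)) (by norm_num : (0 : ℝ) ≤ 1 / 2)
        (by norm_num : (0 : ℝ) ≤ 1 / 2) (by norm_num)
  have hbound : ∀ h, |f (x + h) - f x - L h| ≤ C * ‖h‖ ^ 2 := fun h => by
    have hneg := hle (-h)
    rw [map_neg, norm_neg, ← sub_eq_add_neg] at hneg
    rw [abs_le]
    constructor
    · linarith [hmid h]
    · linarith [hle h]
  rw [hasFDerivAt_iff_isLittleO_nhds_zero]
  refine IsBigO.trans_isLittleO ?_ (isLittleO_norm_pow_id one_lt_two)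
  refine IsBigO.of_bound C (Filter.Eventually.of_forall fun h => ?_)
  simpa only [Real.norm_eq_abs, abs_pow, abs_norm] using hbound h

section MoreauEnvelope

variable {E : Type*} [NormedAddCommGroup E] [InnerProductSpace ℝ E]

/-- Meant for a minimizer map `P` of `y ↦ c‖x - y‖² + φ y`, for which this is the Moreau envelope
of `φ`. -/
def moreauEnvelope (c : ℝ) (φ : E → ℝ) (P : E → E) (x : E) : ℝ :=
  c * ‖x - P x‖ ^ 2 + φ (P x)

variable {c : ℝ} {φ : E → ℝ} {P : E → E}

theorem convexOn_moreauEnvelope (hc : 0 ≤ c) (hφ : ConvexOn ℝ univ φ)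
    (hP : ∀ x y, c * ‖x - P x‖ ^ 2 + φ (P x) ≤ c * ‖x - y‖ ^ 2 + φ y) :
    ConvexOn ℝ univ (moreauEnvelope c φ P) := by
  refine ⟨convex_univ, fun x _ y _ a b ha hb hab => ?_⟩
  have hsq : ‖a • (x - P x) + b • (y - P y)‖ ^ 2 ≤ a * ‖x - P x‖ ^ 2 + b * ‖y - P y‖ ^ 2 :=
    (convexOn_univ_norm.pow (fun _ _ => norm_nonneg _) 2).2 (mem_univ _) (mem_univ _) ha hb hab
  have hφab := hφ.2 (mem_univ (P x)) (mem_univ (P y)) ha hb hab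
  have hcomb : a • x + b • y - (a • P x + b • P y) = a • (x - P x) + b • (y - P y) := by module
  simp only [moreauEnvelope, smul_eq_mul] at hφab ⊢
  calc c * ‖a • x + b • y - P (a • x + b • y)‖ ^ 2 + φ (P (a • x + b • y))
      ≤ c * ‖a • (x - P x) + b • (y - P y)‖ ^ 2 + φ (a • P x + b • P y) := by
        rw [← hcomb]; exact hP _ _
    _ ≤ a * (c * ‖x - P x‖ ^ 2 + φ (P x)) + b * (c * ‖y - P y‖ ^ 2 + φ (P y)) := by
        nlinarith [mul_le_mul_of_nonneg_left hsq hc]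

theorem moreauEnvelope_add_le
    (hP : ∀ x y, c * ‖x - P x‖ ^ 2 + φ (P x) ≤ c * ‖x - y‖ ^ 2 + φ y) (x h : E) :
    moreauEnvelope c φ P (x + h)
      ≤ moreauEnvelope c φ P x + 2 * c * ⟪x - P x, h⟫ + c * ‖h‖ ^ 2 := by
  have hexpand : ‖x + h - P x‖ ^ 2 = ‖x - P x‖ ^ 2 + 2 * ⟪x - P x, h⟫ + ‖h‖ ^ 2 := by
    rw [show x + h - P x = (x - P x) + h by abel, norm_add_sq_real]
  have hmin := hP (x + h) (P x)
  rw [hexpand] at hmin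
  unfold moreauEnvelope
  linarith

theorem hasGradientAt_moreauEnvelope [CompleteSpace E] (hc : 0 ≤ c) (hφ : ConvexOn ℝ univ φ)
    (hP : ∀ x y, c * ‖x - P x‖ ^ 2 + φ (P x) ≤ c * ‖x - y‖ ^ 2 + φ y) (x : E) :
    HasGradientAt (moreauEnvelope c φ P) ((2 * c) • (x - P x)) x := by
  refine (convexOn_moreauEnvelope hc hφ hP).hasFDerivAt_of_le_quadratic _ c fun h => ?_
  simpa only [InnerProductSpace.toDual_apply_apply, real_inner_smul_left, mul_assoc]
    using moreauEnvelope_add_le hP x h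

end MoreauEnvelope

theorem inverse_operator_gradient_of_energy_general
    {E : Type*} [NormedAddCommGroup E] [InnerProductSpace ℝ E] [FiniteDimensional ℝ E]
    (μ₀ : ℝ) (hμ₀ : 0 < μ₀) (χ : ℝ) (hχ : 0 ≤ χ) (Jp : E)
    (U : E → ℝ) (hUconv : ConvexOn ℝ Set.univ U)
    (Jtilde : E → E)
    (hJtilde : ∀ B : E, ∀ J : E,
      1 / (2 * μ₀) * ‖B - Jtilde B‖ ^ 2 + U (Jtilde B) + χ * ‖Jtilde B - Jp‖
        ≤ 1 / (2 * μ₀) * ‖B - J‖ ^ 2 + U J + χ * ‖J - Jp‖) :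
    ∀ B : E, HasGradientAt
      (fun B' : E =>
        1 / (2 * μ₀) * ‖B' - Jtilde B'‖ ^ 2 + U (Jtilde B') + χ * ‖Jtilde B' - Jp‖)
      ((1 / μ₀) • (B - Jtilde B)) B := by
  intro B
  have hφ : ConvexOn ℝ univ fun J => U J + χ * ‖J - Jp‖ := by
    simpa only [dist_eq_norm, smul_eq_mul, Pi.add_def] using
      hUconv.add ((convexOn_univ_dist Jp).smul hχ)
  have hgrad := hasGradientAt_moreauEnvelope (c := 1 / (2 * μ₀)) (by positivity) hφ
    (fun B J => by simpa only [add_assoc] using hJtilde B J) B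
  convert hgrad using 1
  · funext B'
    exact add_assoc _ _ _
  · field_simp

/-- the inverse hysteresis operator `H = (1/μ₀)(B − J̃(B; J_p))` is the
gradient of the energy density `w(B; J_p)`. -/
theorem inverse_operator_gradient_of_energy
    {E : Type*} [NormedAddCommGroup E] [InnerProductSpace ℝ E] [FiniteDimensional ℝ E]
    (μ₀ : ℝ) (hμ₀ : 0 < μ₀) (χ : ℝ) (hχ : 0 ≤ χ) (Jp : E)
    (U : E → ℝ) (hUconv : ConvexOn ℝ Set.univ U) (hUcont : Continuous U)
    (Jtilde : E → E)
    (hJtilde : ∀ B : E, ∀ J : E,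
      1 / (2 * μ₀) * ‖B - Jtilde B‖ ^ 2 + U (Jtilde B) + χ * ‖Jtilde B - Jp‖
        ≤ 1 / (2 * μ₀) * ‖B - J‖ ^ 2 + U J + χ * ‖J - Jp‖) :
    ∀ B : E, HasGradientAt
      (fun B' : E =>
        1 / (2 * μ₀) * ‖B' - Jtilde B'‖ ^ 2 + U (Jtilde B') + χ * ‖Jtilde B' - Jp‖)
      ((1 / μ₀) • (B - Jtilde B)) B :=
  inverse_operator_gradient_of_energy_general μ₀ hμ₀ χ hχ Jp U hUconv Jtilde hJtilde
end

section
/- (Equivalence of forward and inverse hysteresis operators, single pinning force.) Let E be a finite-dimensional real inner product space, let μ₀ > 0, m > 0, χ ≥ 0, H, J_p ∈ E, and let U : E → ℝ be continuous and m-strongly convex. Let J* be the unique minimizer of J ↦ U(J) − ⟪H, J⟫ + χ‖J − J_p‖ and set B = μ₀ • H + J*. Then J* is also the unique minimizer of J ↦ (1/(2μ₀))‖B − J‖² + U(J) + χ‖J − J_p‖, and consequently H = (1/μ₀)(B − J̃(B)) where J̃(B) denotes that minimizer. -/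
open RealInnerProductSpace

/-- equivalence of the forward and inverse hysteresis operators (single
pinning force): if `J*` minimizes the forward incremental functional and
`B = μ₀ • H + J*`, then `J*` is also the unique minimizer of the inverse incremental
functional, and `H = (1/μ₀)(B − J*)`. -/
theorem forward_inverse_equivalence_single
    {E : Type*} [NormedAddCommGroup E] [InnerProductSpace ℝ E] [FiniteDimensional ℝ E]
    (μ₀ m : ℝ) (hμ₀ : 0 < μ₀) (hm : 0 < m) (χ : ℝ) (hχ : 0 ≤ χ) (H Jp : E)
    (U : E → ℝ) (hUcont : Continuous U) (hUconv : StrongConvexOn Set.univ m U)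
    (Jstar : E)
    (hJstar : ∀ J : E,
      U Jstar - ⟪H, Jstar⟫ + χ * ‖Jstar - Jp‖ ≤ U J - ⟪H, J⟫ + χ * ‖J - Jp‖)
    (B : E) (hB : B = μ₀ • H + Jstar) :
    (∀ J : E,
      1 / (2 * μ₀) * ‖B - Jstar‖ ^ 2 + U Jstar + χ * ‖Jstar - Jp‖
        ≤ 1 / (2 * μ₀) * ‖B - J‖ ^ 2 + U J + χ * ‖J - Jp‖) ∧
    (∀ J' : E,
      (∀ J : E,
        1 / (2 * μ₀) * ‖B - J'‖ ^ 2 + U J' + χ * ‖J' - Jp‖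
          ≤ 1 / (2 * μ₀) * ‖B - J‖ ^ 2 + U J + χ * ‖J - Jp‖) → J' = Jstar) ∧
    H = (1 / μ₀) • (B - Jstar) := by
  -- Key algebraic identity
  have key : ∀ J : E,
      1 / (2 * μ₀) * ‖B - J‖ ^ 2 + U J + χ * ‖J - Jp‖
        = μ₀ / 2 * ‖H‖ ^ 2 + ⟪H, Jstar⟫
          + ((U J - ⟪H, J⟫ + χ * ‖J - Jp‖) + 1 / (2 * μ₀) * ‖Jstar - J‖ ^ 2) := by
    intro J
    have hBJ : B - J = μ₀ • H + (Jstar - J) := by rw [hB]; abel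
    have hexp : ‖B - J‖ ^ 2
        = μ₀ ^ 2 * ‖H‖ ^ 2 + 2 * (μ₀ * (⟪H, Jstar⟫ - ⟪H, J⟫)) + ‖Jstar - J‖ ^ 2 := by
      rw [hBJ, norm_add_sq_real, norm_smul, real_inner_smul_left, inner_sub_right,
        Real.norm_eq_abs]
      rw [mul_pow, sq_abs]
    rw [hexp]
    field_simp
    ring
  have hmin : ∀ J : E,
      1 / (2 * μ₀) * ‖B - Jstar‖ ^ 2 + U Jstar + χ * ‖Jstar - Jp‖
        ≤ 1 / (2 * μ₀) * ‖B - J‖ ^ 2 + U J + χ * ‖J - Jp‖ := by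
    intro J
    rw [key Jstar, key J]
    have h1 := hJstar J
    have h2 : (0:ℝ) ≤ 1 / (2 * μ₀) * ‖Jstar - J‖ ^ 2 := by positivity
    simp only [sub_self, norm_zero]
    nlinarith
  refine ⟨hmin, ?_, ?_⟩
  · intro J' hJ'
    have h1 := hJ' Jstar
    have h2 := hmin J'
    rw [key Jstar, key J'] at h1 h2
    have h3 := hJstar J'
    have h4 : ‖Jstar - J'‖ ^ 2 ≤ 0 := by
      have hpos : (0:ℝ) < 1 / (2 * μ₀) := by positivity
      simp only [sub_self, norm_zero] at h1 h2
      nlinarith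
    have h5 : Jstar - J' = 0 := by
      have := norm_eq_zero.mp (by nlinarith [norm_nonneg (Jstar - J'), sq_nonneg ‖Jstar - J'‖] : ‖Jstar - J'‖ = 0)
      exact this
    have : Jstar = J' := by rwa [sub_eq_zero] at h5
    exact this.symm
  · rw [hB]
    simp only [add_sub_cancel_right]
    rw [smul_smul]
    rw [one_div, inv_mul_cancel₀ hμ₀.ne', one_smul]
end

section
/- (Fenchel equality for the hysteresis energy pair.) Let E be a finite-dimensional real inner product space, let μ₀ > 0, m > 0, χ ≥ 0, H, J_p ∈ E, and let U : E → ℝ be continuous and m-strongly convex. Define w_*(H) = (μ₀/2)‖H‖² − inf_J ( U(J) − ⟪H, J⟫ + χ‖J − J_p‖ ) and w(B) = inf_J ( (1/(2μ₀))‖B − J‖² + U(J) + χ‖J − J_p‖ ). If J* is the minimizer of J ↦ U(J) − ⟪H, J⟫ + χ‖J − J_p‖ and B = μ₀ • H + J*, then w(B) + w_*(H) = ⟪H, B⟫. -/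
open RealInnerProductSpace

lemma young_aux {E : Type*} [NormedAddCommGroup E] [InnerProductSpace ℝ E]
    (μ₀ : ℝ) (hμ₀ : 0 < μ₀) (H x : E) :
    ⟪H, x⟫ ≤ 1 / (2 * μ₀) * ‖x‖ ^ 2 + μ₀ / 2 * ‖H‖ ^ 2 := by
  have h0 : (0:ℝ) ≤ ‖x - μ₀ • H‖ ^ 2 := sq_nonneg _
  have hexp : ‖x - μ₀ • H‖ ^ 2 = ‖x‖ ^ 2 - 2 * (μ₀ * ⟪H, x⟫) + μ₀ ^ 2 * ‖H‖ ^ 2 := by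
    rw [norm_sub_sq_real, norm_smul, real_inner_smul_right, real_inner_comm]
    simp [abs_of_pos hμ₀]
    ring
  rw [hexp] at h0
  rw [← sub_nonneg]
  have heq : 1 / (2 * μ₀) * ‖x‖ ^ 2 + μ₀ / 2 * ‖H‖ ^ 2 - ⟪H, x⟫
      = (‖x‖ ^ 2 - 2 * (μ₀ * ⟪H, x⟫) + μ₀ ^ 2 * ‖H‖ ^ 2) / (2 * μ₀) := by
    field_simp; ring
  rw [heq]
  exact div_nonneg h0 (by positivity)

/-- Fenchel equality for the hysteresis energy pair: if `J*` minimizes the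
forward incremental functional and `B = μ₀ • H + J*`, then `w(B) + w_*(H) = ⟪H, B⟫`. -/
theorem fenchel_equality_hysteresis
    {E : Type*} [NormedAddCommGroup E] [InnerProductSpace ℝ E] [FiniteDimensional ℝ E]
    (μ₀ m : ℝ) (hμ₀ : 0 < μ₀) (hm : 0 < m) (χ : ℝ) (hχ : 0 ≤ χ) (H Jp : E)
    (U : E → ℝ) (hUcont : Continuous U) (hUconv : StrongConvexOn Set.univ m U)
    (Jstar : E)
    (hJstar : ∀ J : E,
      U Jstar - ⟪H, Jstar⟫ + χ * ‖Jstar - Jp‖ ≤ U J - ⟪H, J⟫ + χ * ‖J - Jp‖)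
    (B : E) (hB : B = μ₀ • H + Jstar) :
    (⨅ J : E, (1 / (2 * μ₀) * ‖B - J‖ ^ 2 + U J + χ * ‖J - Jp‖))
      + (μ₀ / 2 * ‖H‖ ^ 2 - (⨅ J : E, (U J - ⟪H, J⟫ + χ * ‖J - Jp‖)))
      = ⟪H, B⟫ := by
  set f : E → ℝ := fun J => U J - ⟪H, J⟫ + χ * ‖J - Jp‖ with hf
  set g : E → ℝ := fun J => 1 / (2 * μ₀) * ‖B - J‖ ^ 2 + U J + χ * ‖J - Jp‖ with hg
  have hBJ : B - Jstar = μ₀ • H := by rw [hB]; abel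
  have hfinf : (⨅ J : E, f J) = f Jstar :=
    le_antisymm (ciInf_le ⟨f Jstar, fun x ⟨J, hJ⟩ => hJ ▸ hJstar J⟩ Jstar)
      (le_ciInf hJstar)
  have hgstar : g Jstar = μ₀ / 2 * ‖H‖ ^ 2 + ⟪H, Jstar⟫ + f Jstar := by
    simp only [hg, hf, hBJ, norm_smul, Real.norm_eq_abs, abs_of_pos hμ₀]
    field_simp
    ring
  have hgmin : ∀ J : E, g Jstar ≤ g J := by
    intro J
    have h1 : ⟪H, B - J⟫ - μ₀ / 2 * ‖H‖ ^ 2 ≤ 1 / (2 * μ₀) * ‖B - J‖ ^ 2 := by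
      have := young_aux μ₀ hμ₀ H (B - J)
      linarith
    have h2 : f Jstar ≤ f J := hJstar J
    have : ⟪H, B - J⟫ = ⟪H, B⟫ - ⟪H, J⟫ := inner_sub_right H B J
    rw [hgstar]
    simp only [hg, hf] at *
    have hHB : ⟪H, B⟫ = μ₀ * ‖H‖ ^ 2 + ⟪H, Jstar⟫ := by
      rw [hB, inner_add_right, real_inner_smul_right, real_inner_self_eq_norm_sq]
    nlinarith
  have hginf : (⨅ J : E, g J) = g Jstar :=
    le_antisymm (ciInf_le ⟨g Jstar, fun x ⟨J, hJ⟩ => hJ ▸ hgmin J⟩ Jstar)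
      (le_ciInf hgmin)
  rw [hginf, hfinf, hgstar, hB, inner_add_right, real_inner_smul_right,
    real_inner_self_eq_norm_sq]
  ring
end

section
/- (Assertion 3: forward hysteresis operator with multiple pinning forces.) Let E be a finite-dimensional real inner product space, let μ₀ > 0 and N ≥ 1, and for k = 1,…,N let m_k > 0, χ_k ≥ 0, J_{p,k} ∈ E, and let U_k : E → ℝ be continuous and m_k-strongly convex. For H ∈ E let J_k(H) denote the unique minimizer of J ↦ U_k(J) − ⟪H, J⟫ + χ_k‖J − J_{p,k}‖, and define the co-energy density w_*(H) = (μ₀/2)‖H‖² − Σ_{k=1}^{N} inf_{J ∈ E} ( U_k(J) − ⟪H, J⟫ + χ_k‖J − J_{p,k}‖ ). Then for every H ∈ E, w_* has a gradient at H equal to μ₀ • H + Σ_{k=1}^{N} J_k(H), i.e., HasGradientAt w_* (μ₀ • H + ∑ k, J_k H) H. -/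
open RealInnerProductSpace

section Aux

variable {E : Type*} [NormedAddCommGroup E] [InnerProductSpace ℝ E]

/-- growth at the minimizer of a strongly convex + linear + convex perturbation -/
lemma pinning_grow (m χ : ℝ) (hm : 0 < m) (hχ : 0 ≤ χ) (Jp : E) (U : E → ℝ)
    (hUconv : StrongConvexOn Set.univ m U) (H : E) (Jst : E)
    (hJ : ∀ J : E, U Jst - ⟪H, Jst⟫ + χ * ‖Jst - Jp‖ ≤ U J - ⟪H, J⟫ + χ * ‖J - Jp‖)
    (J : E) :
    U Jst - ⟪H, Jst⟫ + χ * ‖Jst - Jp‖ + m / 4 * ‖J - Jst‖ ^ 2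
      ≤ U J - ⟪H, J⟫ + χ * ‖J - Jp‖ := by
  have hmid := hUconv.2 (Set.mem_univ Jst) (Set.mem_univ J)
    (by norm_num : (0:ℝ) ≤ 1/2) (by norm_num : (0:ℝ) ≤ 1/2) (by norm_num)
  set M : E := (1/2 : ℝ) • Jst + (1/2 : ℝ) • J with hM
  have hinner : ⟪H, M⟫ = 1/2 * ⟪H, Jst⟫ + 1/2 * ⟪H, J⟫ := by
    simp [hM, inner_add_right, inner_smul_right]
  have hnorm : ‖M - Jp‖ ≤ 1/2 * ‖Jst - Jp‖ + 1/2 * ‖J - Jp‖ := by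
    have : M - Jp = (1/2 : ℝ) • (Jst - Jp) + (1/2 : ℝ) • (J - Jp) := by
      rw [hM]; module
    rw [this]
    calc ‖(1/2 : ℝ) • (Jst - Jp) + (1/2 : ℝ) • (J - Jp)‖
        ≤ ‖(1/2 : ℝ) • (Jst - Jp)‖ + ‖(1/2 : ℝ) • (J - Jp)‖ := norm_add_le _ _
      _ = 1/2 * ‖Jst - Jp‖ + 1/2 * ‖J - Jp‖ := by
          rw [norm_smul, norm_smul]; norm_num
  have hJM := hJ M
  have hns : ‖Jst - J‖ = ‖J - Jst‖ := norm_sub_rev _ _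
  simp only [smul_eq_mul] at hmid
  rw [hns] at hmid
  nlinarith [hJM, hmid, hinner, hnorm, mul_le_mul_of_nonneg_left hnorm hχ]

lemma pinning_key (m χ : ℝ) (hm : 0 < m) (hχ : 0 ≤ χ) (Jp : E) (U : E → ℝ)
    (hUconv : StrongConvexOn Set.univ m U) (Jm : E → E)
    (hJ : ∀ A J : E, U (Jm A) - ⟪A, Jm A⟫ + χ * ‖Jm A - Jp‖ ≤ U J - ⟪A, J⟫ + χ * ‖J - Jp‖)
    (H H' : E) :
    |(⨅ J : E, (U J - ⟪H', J⟫ + χ * ‖J - Jp‖))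
      - (⨅ J : E, (U J - ⟪H, J⟫ + χ * ‖J - Jp‖)) + ⟪H' - H, Jm H⟫|
      ≤ ‖H' - H‖ ^ 2 / m := by
  set g : E → E → ℝ := fun A J => U J - ⟪A, J⟫ + χ * ‖J - Jp‖ with hg
  have infEq : ∀ A : E, (⨅ J : E, g A J) = g A (Jm A) := by
    intro A
    refine le_antisymm ?_ (le_ciInf (hJ A))
    exact ciInf_le ⟨g A (Jm A), by rintro _ ⟨J, rfl⟩; exact hJ A J⟩ _
  have gshift : ∀ A B J : E, g B J = g A J - ⟪B - A, J⟫ := by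
    intro A B J
    simp only [hg, inner_sub_left]
    ring
  -- upper bound
  have hub : g H' (Jm H') ≤ g H (Jm H) - ⟪H' - H, Jm H⟫ := by
    calc g H' (Jm H') ≤ g H' (Jm H) := hJ H' (Jm H)
      _ = g H (Jm H) - ⟪H' - H, Jm H⟫ := gshift H H' (Jm H)
  -- lower bound
  have hlb : g H (Jm H) - ⟪H' - H, Jm H⟫ - ‖H' - H‖ ^ 2 / m ≤ g H' (Jm H') := by
    have hgrow := pinning_grow m χ hm hχ Jp U hUconv H (Jm H) (hJ H) (Jm H')
    have h1 : g H' (Jm H') = g H (Jm H') - ⟪H' - H, Jm H'⟫ := gshift H H' (Jm H')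
    have h2 : ⟪H' - H, Jm H'⟫ = ⟪H' - H, Jm H⟫ + ⟪H' - H, Jm H' - Jm H⟫ := by
      rw [← inner_add_right]; congr 1; abel
    have h3 : ⟪H' - H, Jm H' - Jm H⟫ ≤ ‖H' - H‖ * ‖Jm H' - Jm H‖ :=
      real_inner_le_norm _ _
    have h4 : ‖H' - H‖ * ‖Jm H' - Jm H‖ - m / 4 * ‖Jm H' - Jm H‖ ^ 2
        ≤ ‖H' - H‖ ^ 2 / m := by
      rw [le_div_iff₀ hm]
      nlinarith [sq_nonneg (‖H' - H‖ - m / 2 * ‖Jm H' - Jm H‖)]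
    have hgrow' : g H (Jm H) + m / 4 * ‖Jm H' - Jm H‖ ^ 2 ≤ g H (Jm H') := hgrow
    clear_value g
    linarith [h1, h2, h3, h4, hgrow']
  rw [infEq H', infEq H, abs_le]
  clear_value g
  have hnn : (0:ℝ) ≤ ‖H' - H‖ ^ 2 / m := div_nonneg (sq_nonneg _) hm.le
  exact ⟨by linarith [hlb, hub, hnn], by linarith [hlb, hub, hnn]⟩

end Aux

/-- Assertion 3: forward hysteresis operator with multiple pinning
forces: the co-energy density `w_*(H; {J_p})` has gradient `μ₀ • H + Σ_k J_k(H)`. -/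
theorem forward_operator_multiple_pinning
    {E : Type*} [NormedAddCommGroup E] [InnerProductSpace ℝ E] [FiniteDimensional ℝ E]
    (μ₀ : ℝ) (hμ₀ : 0 < μ₀) (N : ℕ) (hN : 1 ≤ N)
    (m χ : Fin N → ℝ) (hm : ∀ k, 0 < m k) (hχ : ∀ k, 0 ≤ χ k)
    (Jp : Fin N → E)
    (U : Fin N → E → ℝ) (hUcont : ∀ k, Continuous (U k))
    (hUconv : ∀ k, StrongConvexOn Set.univ (m k) (U k))
    (Jmap : Fin N → E → E)
    (hJmap : ∀ k, ∀ H : E, ∀ J : E,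
      U k (Jmap k H) - ⟪H, Jmap k H⟫ + χ k * ‖Jmap k H - Jp k‖
        ≤ U k J - ⟪H, J⟫ + χ k * ‖J - Jp k‖) :
    ∀ H : E, HasGradientAt
      (fun H' : E => μ₀ / 2 * ‖H'‖ ^ 2
        - ∑ k, (⨅ J : E, (U k J - ⟪H', J⟫ + χ k * ‖J - Jp k‖)))
      (μ₀ • H + ∑ k, Jmap k H) H := by
  intro H
  rw [hasGradientAt_iff_isLittleO, Asymptotics.isLittleO_iff]
  intro ε hε
  set C : ℝ := μ₀ / 2 + ∑ k, 1 / m k with hC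
  have hCpos : 0 < C := by
    have : 0 ≤ ∑ k, 1 / m k :=
      Finset.sum_nonneg fun k _ => one_div_nonneg.mpr (hm k).le
    exact add_pos_of_pos_of_nonneg (by positivity) this
  rw [Metric.eventually_nhds_iff]
  refine ⟨ε / C, div_pos hε hCpos, fun H' hd => ?_⟩
  rw [dist_eq_norm] at hd
  set φ : Fin N → E → ℝ := fun k A => ⨅ J : E, (U k J - ⟪A, J⟫ + χ k * ‖J - Jp k‖) with hφ
  -- key per-k bound
  have key : ∀ k, |φ k H' - φ k H + ⟪H' - H, Jmap k H⟫| ≤ ‖H' - H‖ ^ 2 / m k := by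
    intro k
    exact pinning_key (m k) (χ k) (hm k) (hχ k) (Jp k) (U k) (hUconv k) (Jmap k)
      (hJmap k) H H'
  -- decompose the error
  have hinner : ⟪μ₀ • H + ∑ k, Jmap k H, H' - H⟫
      = μ₀ * ⟪H, H' - H⟫ + ∑ k, ⟪Jmap k H, H' - H⟫ := by
    rw [inner_add_left, real_inner_smul_left, sum_inner]
  have hquad : μ₀ / 2 * ‖H'‖ ^ 2 - μ₀ / 2 * ‖H‖ ^ 2 - μ₀ * ⟪H, H' - H⟫
      = μ₀ / 2 * ‖H' - H‖ ^ 2 := by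
    have h1 : ‖H' - H‖ ^ 2 = ‖H'‖ ^ 2 - 2 * ⟪H', H⟫ + ‖H‖ ^ 2 := norm_sub_sq_real H' H
    have h2 : ⟪H, H' - H⟫ = ⟪H, H'⟫ - ‖H‖ ^ 2 := by
      rw [inner_sub_right, real_inner_self_eq_norm_sq]
    have h3 : ⟪H, H'⟫ = ⟪H', H⟫ := real_inner_comm _ _
    nlinarith [h1, h2, h3]
  set err : ℝ := (μ₀ / 2 * ‖H'‖ ^ 2 - ∑ k, φ k H')
      - (μ₀ / 2 * ‖H‖ ^ 2 - ∑ k, φ k H)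
      - ⟪μ₀ • H + ∑ k, Jmap k H, H' - H⟫ with herr
  have hdecomp : err = μ₀ / 2 * ‖H' - H‖ ^ 2
      - ∑ k, (φ k H' - φ k H + ⟪H' - H, Jmap k H⟫) := by
    rw [herr, hinner, Finset.sum_add_distrib, Finset.sum_sub_distrib]
    have : ∀ k ∈ Finset.univ, ⟪H' - H, Jmap k H⟫ = ⟪Jmap k H, H' - H⟫ :=
      fun k _ => real_inner_comm _ _
    rw [Finset.sum_congr rfl this]
    linarith [hquad]
  have hbound : |err| ≤ C * ‖H' - H‖ ^ 2 := by
    rw [hdecomp]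
    calc |μ₀ / 2 * ‖H' - H‖ ^ 2 - ∑ k, (φ k H' - φ k H + ⟪H' - H, Jmap k H⟫)|
        ≤ |μ₀ / 2 * ‖H' - H‖ ^ 2| + |∑ k, (φ k H' - φ k H + ⟪H' - H, Jmap k H⟫)| :=
          abs_sub _ _
      _ ≤ μ₀ / 2 * ‖H' - H‖ ^ 2 + ∑ k, ‖H' - H‖ ^ 2 / m k := by
          gcongr
          · rw [abs_of_nonneg (by positivity)]
          · exact (Finset.abs_sum_le_sum_abs _ _).trans
              (Finset.sum_le_sum fun k _ => key k)
      _ = C * ‖H' - H‖ ^ 2 := by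
          rw [hC, add_mul, Finset.sum_mul]
          refine congrArg₂ (· + ·) rfl ?_
          exact Finset.sum_congr rfl fun k _ => by ring
  show ‖err‖ ≤ ε * ‖H' - H‖
  rw [Real.norm_eq_abs]
  calc |err| ≤ C * ‖H' - H‖ ^ 2 := hbound
    _ ≤ C * ((ε / C) * ‖H' - H‖) := by
        refine mul_le_mul_of_nonneg_left ?_ hCpos.le
        rw [sq]
        exact mul_le_mul_of_nonneg_right hd.le (norm_nonneg _)
    _ = ε * ‖H' - H‖ := by field_simp
end

section
/- Let E be a finite-dimensional real inner product space, let μ₀ > 0 and N ≥ 1, and for k = 1,…,N let m_k > 0, χ_k ≥ 0, J_{p,k} ∈ E, and let U_k : E → ℝ be continuous and m_k-strongly convex. Then for every B ∈ E the joint functional on E^N, (J_1,…,J_N) ↦ (1/(2μ₀))‖B − Σ_{k=1}^{N} J_k‖² + Σ_{k=1}^{N} ( U_k(J_k) + χ_k‖J_k − J_{p,k}‖ ), attains its infimum at a unique point (J̃_1(B),…,J̃_N(B)). -/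
open RealInnerProductSpace
open Filter Set

section Aux
variable {V : Type*} [NormedAddCommGroup V] [NormedSpace ℝ V]

/-- A continuous convex function on a finite-dimensional space has an
affine-type lower bound. -/
lemma convex_affine_lb [FiniteDimensional ℝ V]
    (h : V → ℝ) (hc : Continuous h) (hcv : ConvexOn ℝ Set.univ h) :
    ∃ C : ℝ, 0 ≤ C ∧ ∀ x, -(C * (‖x‖ + 1)) ≤ h x := by
  obtain ⟨z, hz, hmin'⟩ := (isCompact_closedBall (0 : V) 1).exists_isMinOn
    ⟨0, by simp⟩ hc.continuousOn
  have hmin : ∀ x ∈ Metric.closedBall (0:V) 1, h z ≤ h x := fun x hx => hmin' hx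
  refine ⟨|h z| + |h 0|, by positivity, fun x => ?_⟩
  rcases le_or_gt ‖x‖ 1 with hx | hx
  · have h1 : h z ≤ h x := hmin x (by simpa [Metric.mem_closedBall, dist_eq_norm] using hx)
    have h2 : -|h z| ≤ h z := neg_abs_le _
    have h3 : (0:ℝ) ≤ ‖x‖ := norm_nonneg _
    nlinarith [abs_nonneg (h 0), abs_nonneg (h z)]
  · set t := ‖x‖ with ht
    have ht1 : (1:ℝ) < t := hx
    have ht0 : (0:ℝ) < t := by linarith
    have ha : (0:ℝ) ≤ 1 - 1/t := by
      have : 1/t ≤ 1 := by rw [div_le_one ht0]; linarith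
      linarith
    have hb : (0:ℝ) ≤ 1/t := by positivity
    have hab : (1 - 1/t) + 1/t = 1 := by ring
    have hcv2 := hcv.2 (mem_univ (0:V)) (mem_univ x) ha hb hab
    have hu : ‖(1 - 1/t) • (0:V) + (1/t) • x‖ = 1 := by
      rw [smul_zero, zero_add, norm_smul, Real.norm_eq_abs,
        abs_of_pos (show (0:ℝ) < 1/t by positivity), ← ht]
      field_simp
    have hzu : h z ≤ h ((1 - 1/t) • (0:V) + (1/t) • x) :=
      hmin _ (by rw [Metric.mem_closedBall, dist_eq_norm, sub_zero, hu])
    have key : h z ≤ (1 - 1/t) * h 0 + (1/t) * h x := by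
      calc h z ≤ h ((1 - 1/t) • (0:V) + (1/t) • x) := hzu
        _ ≤ (1 - 1/t) * h 0 + (1/t) * h x := by simpa [smul_eq_mul] using hcv2
    have key' : t * h z ≤ (t - 1) * h 0 + h x := by
      have h4 := mul_le_mul_of_nonneg_left key (le_of_lt ht0)
      have htne : t ≠ 0 := ne_of_gt ht0
      field_simp at h4
      nlinarith [h4]
    nlinarith [abs_nonneg (h 0), abs_nonneg (h z), neg_abs_le (h z), neg_abs_le (h 0),
      le_abs_self (h 0)]

/-- Norm of difference with a fixed point is convex. -/
lemma convexOn_norm_sub (p : V) : ConvexOn ℝ Set.univ (fun x : V => ‖x - p‖) := by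
  simpa [dist_eq_norm] using convexOn_univ_dist p (E := V)

/-- A sum of coordinatewise strictly convex functions is strictly convex on the pi type. -/
lemma strictConvexOn_pi_sum {N : ℕ} (g : Fin N → V → ℝ)
    (hg : ∀ k, StrictConvexOn ℝ Set.univ (g k)) :
    StrictConvexOn ℝ Set.univ (fun J : Fin N → V => ∑ k, g k (J k)) := by
  refine ⟨convex_univ, fun x _ y _ hxy a b ha hb hab => ?_⟩
  have hne : ∃ k, x k ≠ y k := by
    by_contra hcon
    push_neg at hcon
    exact hxy (funext hcon)
  obtain ⟨k₀, hk₀⟩ := hne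
  have key : ∀ k, g k (a • x k + b • y k) ≤ a * g k (x k) + b * g k (y k) := by
    intro k
    rcases eq_or_ne (x k) (y k) with heq | hne'
    · rw [heq, ← add_smul, hab, one_smul, ← add_mul, hab, one_mul]
    · have := (hg k).2 (Set.mem_univ (x k)) (Set.mem_univ (y k)) hne' ha hb hab
      simp only [smul_eq_mul] at this
      exact this.le
  have keyk₀ : g k₀ (a • x k₀ + b • y k₀) < a * g k₀ (x k₀) + b * g k₀ (y k₀) := by
    have := (hg k₀).2 (Set.mem_univ (x k₀)) (Set.mem_univ (y k₀)) hk₀ ha hb hab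
    simpa only [smul_eq_mul] using this
  show ∑ k, g k (a • x k + b • y k) < a * ∑ k, g k (x k) + b * ∑ k, g k (y k)
  rw [Finset.mul_sum, Finset.mul_sum, ← Finset.sum_add_distrib]
  exact Finset.sum_lt_sum (fun k _ => key k) ⟨k₀, Finset.mem_univ _, keyk₀⟩

/-- The squared norm is convex. -/
lemma convexOn_normSq : ConvexOn ℝ Set.univ (fun x : V => ‖x‖ ^ 2) := by
  refine ⟨convex_univ, fun x _ y _ a b ha hb hab => ?_⟩
  simp only [smul_eq_mul]
  have h1 : ‖a • x + b • y‖ ≤ a * ‖x‖ + b * ‖y‖ := by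
    calc ‖a • x + b • y‖ ≤ ‖a • x‖ + ‖b • y‖ := norm_add_le _ _
      _ = a * ‖x‖ + b * ‖y‖ := by rw [norm_smul, norm_smul, Real.norm_eq_abs,
          Real.norm_eq_abs, abs_of_nonneg ha, abs_of_nonneg hb]
  have h2 : (0:ℝ) ≤ a * ‖x‖ + b * ‖y‖ := by positivity
  have h3 : ‖a • x + b • y‖ ^ 2 ≤ (a * ‖x‖ + b * ‖y‖) ^ 2 :=
    pow_le_pow_left₀ (norm_nonneg _) h1 2
  nlinarith [sq_nonneg (‖x‖ - ‖y‖), mul_nonneg ha hb, norm_nonneg x, norm_nonneg y]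

end Aux

/-- the joint functional of the multi-pinning inverse hysteresis model
attains its infimum at a unique tuple `(J̃_1(B), …, J̃_N(B))`. -/
theorem joint_functional_unique_minimizer
    {E : Type*} [NormedAddCommGroup E] [InnerProductSpace ℝ E] [FiniteDimensional ℝ E]
    (μ₀ : ℝ) (hμ₀ : 0 < μ₀) (N : ℕ) (hN : 1 ≤ N)
    (m χ : Fin N → ℝ) (hm : ∀ k, 0 < m k) (hχ : ∀ k, 0 ≤ χ k)
    (Jp : Fin N → E)
    (U : Fin N → E → ℝ) (hUcont : ∀ k, Continuous (U k))
    (hUconv : ∀ k, StrongConvexOn Set.univ (m k) (U k)) :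
    ∀ B : E, ∃! Jtilde : Fin N → E, ∀ Js : Fin N → E,
      1 / (2 * μ₀) * ‖B - ∑ k, Jtilde k‖ ^ 2
          + ∑ k, (U k (Jtilde k) + χ k * ‖Jtilde k - Jp k‖)
        ≤ 1 / (2 * μ₀) * ‖B - ∑ k, Js k‖ ^ 2
          + ∑ k, (U k (Js k) + χ k * ‖Js k - Jp k‖) := by
  intro B
  haveI : Nonempty (Fin N) := ⟨⟨0, hN⟩⟩
  set F : (Fin N → E) → ℝ := fun J =>
    1 / (2 * μ₀) * ‖B - ∑ k, J k‖ ^ 2 + ∑ k, (U k (J k) + χ k * ‖J k - Jp k‖) with hF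
  show ∃! Jtilde : Fin N → E, ∀ Js : Fin N → E, F Jtilde ≤ F Js
  -- continuity
  have hFcont : Continuous F := by
    apply Continuous.add
    · exact (continuous_const.mul
        (((continuous_const.sub (continuous_finset_sum _
          (fun k _ => continuous_apply k))).norm).pow 2))
    · exact continuous_finset_sum _ fun k _ =>
        ((hUcont k).comp (continuous_apply k)).add
          (continuous_const.mul (((continuous_apply k).sub continuous_const).norm))
  -- each summand is strictly convex
  have hgstrict : ∀ k, StrictConvexOn ℝ Set.univ (fun x : E => U k x + χ k * ‖x - Jp k‖) := by
    intro k
    exact ((hUconv k).strictConvexOn (hm k)).add_convexOn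
      (by simpa [smul_eq_mul] using (convexOn_norm_sub (Jp k)).smul (hχ k))
  -- strict convexity of F
  have hFstrict : StrictConvexOn ℝ Set.univ F := by
    have hq : ConvexOn ℝ Set.univ (fun J : Fin N → E => 1 / (2 * μ₀) * ‖B - ∑ k, J k‖ ^ 2) := by
      have hlin : ConvexOn ℝ Set.univ (fun J : Fin N → E => ‖B - ∑ k, J k‖ ^ 2) := by
        refine ⟨convex_univ, fun x _ y _ a b ha hb hab => ?_⟩
        have hrw : B - ∑ k, (a • x + b • y) k
            = a • (B - ∑ k, x k) + b • (B - ∑ k, y k) := by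
          have hB : a • B + b • B = B := by rw [← add_smul, hab, one_smul]
          simp only [Pi.add_apply, Pi.smul_apply]
          rw [Finset.sum_add_distrib, ← Finset.smul_sum, ← Finset.smul_sum, smul_sub,
            smul_sub, sub_add_sub_comm, hB]
        show ‖B - ∑ k, (a • x + b • y) k‖ ^ 2
            ≤ a • ‖B - ∑ k, x k‖ ^ 2 + b • ‖B - ∑ k, y k‖ ^ 2
        rw [hrw]
        exact convexOn_normSq.2 (mem_univ _) (mem_univ _) ha hb hab
      have h0 : (0:ℝ) ≤ 1 / (2 * μ₀) := by positivity
      simpa [smul_eq_mul] using hlin.smul h0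
    have hs := strictConvexOn_pi_sum (fun k x => U k x + χ k * ‖x - Jp k‖) hgstrict
    exact hq.add_strictConvexOn hs
  -- coercive lower bound for each U k
  have hlb : ∀ k, ∃ C : ℝ, 0 ≤ C ∧ ∀ x : E, m k / 2 * ‖x‖ ^ 2 - C * (‖x‖ + 1) ≤ U k x := by
    intro k
    obtain ⟨C, hC0, hC⟩ := convex_affine_lb (fun x => U k x - m k / 2 * ‖x‖ ^ 2)
      (by continuity) (strongConvexOn_iff_convex.mp (hUconv k))
    exact ⟨C, hC0, fun x => by have := hC x; linarith⟩
  choose C hC0 hC using hlb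
  -- gather constants
  set m₀ : ℝ := Finset.univ.inf' Finset.univ_nonempty m with hm₀
  have hm₀pos : 0 < m₀ := by
    rw [hm₀]
    exact (Finset.lt_inf'_iff _).mpr (fun k _ => hm k)
  have hm₀le : ∀ k, m₀ ≤ m k := fun k => Finset.inf'_le _ (Finset.mem_univ k)
  set C₀ : ℝ := Finset.univ.sup' Finset.univ_nonempty C with hC₀
  have hC₀0 : 0 ≤ C₀ := le_trans (hC0 (Classical.arbitrary _))
    (Finset.le_sup' _ (Finset.mem_univ _))
  have hC₀ge : ∀ k, C k ≤ C₀ := fun k => Finset.le_sup' _ (Finset.mem_univ k)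
  -- uniform per-coordinate lower bound
  have hterm : ∀ (k : Fin N) (x : E),
      m₀ / 2 * ‖x‖ ^ 2 - C₀ * (‖x‖ + 1) ≤ U k x + χ k * ‖x - Jp k‖ := by
    intro k x
    have h1 := hC k x
    have h2 : m₀ / 2 * ‖x‖ ^ 2 ≤ m k / 2 * ‖x‖ ^ 2 := by
      have := hm₀le k
      nlinarith [sq_nonneg ‖x‖]
    have h3 : C k * (‖x‖ + 1) ≤ C₀ * (‖x‖ + 1) := by
      have := hC₀ge k
      nlinarith [norm_nonneg x]
    have h4 : 0 ≤ χ k * ‖x - Jp k‖ := mul_nonneg (hχ k) (norm_nonneg _)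
    linarith
  -- floor constant for the quadratic lower bound
  set Q : ℝ := -(C₀ ^ 2 / (2 * m₀)) - C₀ with hQ
  have hQle : ∀ r : ℝ, 0 ≤ r → Q ≤ m₀ / 2 * r ^ 2 - C₀ * (r + 1) := by
    intro r hr
    have hkey : m₀ / 2 * r ^ 2 - C₀ * r + C₀ ^ 2 / (2 * m₀) = (m₀ * r - C₀) ^ 2 / (2 * m₀) := by
      field_simp
      ring
    have hpos : (0:ℝ) ≤ (m₀ * r - C₀) ^ 2 / (2 * m₀) := by positivity
    rw [hQ]
    linarith [hkey ▸ hpos]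
  -- global coercive bound: F J ≥ ψ ‖J‖
  set ψ : ℝ → ℝ := fun r => m₀ / 2 * r ^ 2 - C₀ * (r + 1) + (N - 1 : ℝ) * Q with hψ
  clear_value ψ Q C₀ m₀ F
  have hFlb : ∀ J : Fin N → E, ψ ‖J‖ ≤ F J := by
    intro J
    obtain ⟨k₀, -, hk₀⟩ := Finset.exists_max_image Finset.univ (fun k => ‖J k‖)
      Finset.univ_nonempty
    have hnorm : ‖J‖ = ‖J k₀‖ :=
      le_antisymm ((pi_norm_le_iff_of_nonneg (norm_nonneg _)).mpr
        fun k => hk₀ k (Finset.mem_univ k)) (norm_le_pi_norm J k₀)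
    have hnn : 0 ≤ 1 / (2 * μ₀) * ‖B - ∑ k, J k‖ ^ 2 := by positivity
    have hsum : (N - 1 : ℝ) * Q + (m₀ / 2 * ‖J k₀‖ ^ 2 - C₀ * (‖J k₀‖ + 1))
        ≤ ∑ k, (U k (J k) + χ k * ‖J k - Jp k‖) := by
      rw [← Finset.sum_erase_add _ _ (Finset.mem_univ k₀)]
      apply add_le_add
      · calc (N - 1 : ℝ) * Q = ((Finset.univ.erase k₀).card : ℝ) * Q := by
              rw [Finset.card_erase_of_mem (Finset.mem_univ _), Finset.card_univ,
                Fintype.card_fin]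
              push_cast [Nat.cast_sub hN]
              ring
          _ = ∑ _k ∈ Finset.univ.erase k₀, Q := by rw [Finset.sum_const, nsmul_eq_mul]
          _ ≤ _ := Finset.sum_le_sum fun k _ =>
              le_trans (hQle _ (norm_nonneg _)) (hterm k (J k))
      · exact hterm k₀ (J k₀)
    rw [hF, hψ, hnorm]
    linarith
  -- coercivity: F tends to infinity at the cocompact filter
  have hψtop : Tendsto ψ atTop atTop := by
    refine tendsto_atTop_mono' atTop ?_ tendsto_id
    rw [Filter.EventuallyLE, eventually_atTop]
    refine ⟨max 1 ((2 * (C₀ + 1 + |C₀ + (1 - N : ℝ) * Q|)) / m₀), fun r hr => ?_⟩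
    have hr1 : (1:ℝ) ≤ r := le_trans (le_max_left _ _) hr
    have hr2 : (2 * (C₀ + 1 + |C₀ + (1 - N : ℝ) * Q|)) / m₀ ≤ r :=
      le_trans (le_max_right _ _) hr
    have hr2' : 2 * (C₀ + 1 + |C₀ + (1 - N : ℝ) * Q|) ≤ m₀ * r := by
      rw [div_le_iff₀ hm₀pos] at hr2; linarith
    have habs : C₀ + (1 - N : ℝ) * Q ≤ |C₀ + (1 - N : ℝ) * Q| := le_abs_self _
    rw [hψ]
    simp only [id]
    have hA0 : 0 ≤ |C₀ + (1 - N : ℝ) * Q| := abs_nonneg _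
    have hp1 : 2 * (C₀ + 1 + |C₀ + (1 - N : ℝ) * Q|) * r ≤ m₀ * r * r :=
      mul_le_mul_of_nonneg_right hr2' (by linarith)
    have hp2 : |C₀ + (1 - N : ℝ) * Q| * 1 ≤ |C₀ + (1 - N : ℝ) * Q| * r :=
      mul_le_mul_of_nonneg_left hr1 hA0
    have hrr : r ^ 2 = r * r := sq r
    nlinarith [hp1, hp2, habs, hrr]
  have hFtop : Tendsto F (cocompact (Fin N → E)) atTop :=
    tendsto_atTop_mono hFlb (hψtop.comp tendsto_norm_cocompact_atTop)
  -- existence of a minimizer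
  obtain ⟨Jt, hJt⟩ := hFcont.exists_forall_le hFtop
  refine ⟨Jt, hJt, fun J' hJ' => ?_⟩
  -- uniqueness via strict convexity
  by_contra hne
  have h1 : F Jt ≤ F ((1/2 : ℝ) • J' + (1/2 : ℝ) • Jt) := hJt _
  have h2 := hFstrict.2 (mem_univ J') (mem_univ Jt) hne
    (by norm_num : (0:ℝ) < 1/2) (by norm_num : (0:ℝ) < 1/2)
    (by norm_num : (1/2 : ℝ) + 1/2 = 1)
  rw [smul_eq_mul, smul_eq_mul] at h2
  have h3 : F J' ≤ F Jt := hJ' Jt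
  have h4 : F Jt ≤ F J' := hJt J'
  have h5 := h1.trans_lt h2
  linarith
end

section
/- (Assertion 4, gradient formula: inverse hysteresis operator with multiple pinning forces.) Let E be a finite-dimensional real inner product space, let μ₀ > 0 and N ≥ 1, and for k = 1,…,N let m_k > 0, χ_k ≥ 0, J_{p,k} ∈ E, and let U_k : E → ℝ be continuous and m_k-strongly convex. For B ∈ E let (J̃_1(B),…,J̃_N(B)) denote the unique minimizer of (J_1,…,J_N) ↦ (1/(2μ₀))‖B − Σ_k J_k‖² + Σ_k ( U_k(J_k) + χ_k‖J_k − J_{p,k}‖ ), and define w(B) as the infimum value. Then for every B ∈ E, w has a gradient at B equal to (1/μ₀)(B − Σ_{k=1}^{N} J̃_k(B)), i.e., HasGradientAt w ((1/μ₀) • (B − ∑ k, J̃_k B)) B. -/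
open RealInnerProductSpace

section Aux

variable {E : Type*} [NormedAddCommGroup E] [InnerProductSpace ℝ E]

lemma quad_diff_identity (B B' S S' : E) :
    ‖B - S'‖ ^ 2 - ‖B' - S'‖ ^ 2 + ‖B' - S‖ ^ 2 - ‖B - S‖ ^ 2
      = 2 * ⟪B' - B, S' - S⟫ := by
  simp only [norm_sub_sq_real, inner_sub_left, inner_sub_right]
  ring

lemma norm_expand (a b : E) : ‖a + b‖ ^ 2 = ‖a‖ ^ 2 + 2 * ⟪a, b⟫ + ‖b‖ ^ 2 :=
  norm_add_sq_real a b

/-- Auxiliary: the multi-pinning energy functional. -/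
noncomputable def phiE {N : ℕ} (μ₀ : ℝ) (χ : Fin N → ℝ) (Jp : Fin N → E)
    (U : Fin N → E → ℝ) (b : E) (J : Fin N → E) : ℝ :=
  1 / (2 * μ₀) * ‖b - ∑ k, J k‖ ^ 2 + ∑ k, (U k (J k) + χ k * ‖J k - Jp k‖)

end Aux

set_option maxHeartbeats 1600000 in
lemma multiPin_minimizer_lipschitz
    {E : Type*} [NormedAddCommGroup E] [InnerProductSpace ℝ E]
    (μ₀ : ℝ) (hμ₀ : 0 < μ₀) (N : ℕ) (hN : 1 ≤ N)
    (m χ : Fin N → ℝ) (hm : ∀ k, 0 < m k) (hχ : ∀ k, 0 ≤ χ k)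
    (Jp : Fin N → E)
    (U : Fin N → E → ℝ)
    (hUconv : ∀ k, StrongConvexOn Set.univ (m k) (U k))
    (Jtilde : E → Fin N → E)
    (hmin : ∀ b : E, ∀ Js : Fin N → E,
      phiE μ₀ χ Jp U b (Jtilde b) ≤ phiE μ₀ χ Jp U b Js) :
    ∃ C : ℝ, 0 < C ∧ ∀ B B' : E, ∑ k, ‖Jtilde B' k - Jtilde B k‖ ≤ C * ‖B' - B‖ := by
  haveI : Nonempty (Fin N) := ⟨⟨0, hN⟩⟩
  have hne : (Finset.univ : Finset (Fin N)).Nonempty := Finset.univ_nonempty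
  obtain ⟨mmin, hmminpos, hmmin_le⟩ :
      ∃ mm : ℝ, 0 < mm ∧ ∀ k : Fin N, mm ≤ m k := by
    refine ⟨Finset.univ.inf' hne m, ?_, fun k => Finset.inf'_le _ (Finset.mem_univ k)⟩
    rw [Finset.lt_inf'_iff]
    exact fun i _ => hm i
  have hNpos : (0:ℝ) < N := by exact_mod_cast Nat.lt_of_lt_of_le Nat.zero_lt_one hN
  obtain ⟨C, hCpos, hCdef⟩ :
      ∃ C : ℝ, 0 < C ∧ C = 4 * N / (mmin * μ₀) :=
    ⟨4 * N / (mmin * μ₀), div_pos (by linarith) (mul_pos hmminpos hμ₀), rfl⟩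
  refine ⟨C, hCpos, ?_⟩
  intro B B'
  set J := Jtilde B
  set J' := Jtilde B'
  set S : E := ∑ k, J k with hS
  set S' : E := ∑ k, J' k with hS'
  set M : Fin N → E := fun k => (1/2 : ℝ) • J k + (1/2 : ℝ) • J' k with hM
  have hMsum : ∑ k, M k = (1/2 : ℝ) • S + (1/2 : ℝ) • S' := by
    rw [hM, hS, hS', Finset.sum_add_distrib, Finset.smul_sum, Finset.smul_sum]
  -- midpoint inequality
  have hmid : phiE μ₀ χ Jp U B M ≤ 1/2 * phiE μ₀ χ Jp U B J + 1/2 * phiE μ₀ χ Jp U B J'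
      - (1/8) * ∑ k, m k * ‖J k - J' k‖ ^ 2 := by
    have hquad : 1 / (2 * μ₀) * ‖B - ∑ k, M k‖ ^ 2
        ≤ 1/2 * (1 / (2 * μ₀) * ‖B - S‖ ^ 2) + 1/2 * (1 / (2 * μ₀) * ‖B - S'‖ ^ 2) := by
      have h1 : B - ∑ k, M k = (1/2 : ℝ) • (B - S) + (1/2 : ℝ) • (B - S') := by
        rw [hMsum]; module
      have h2 : ‖B - ∑ k, M k‖ ≤ 1/2 * ‖B - S‖ + 1/2 * ‖B - S'‖ := by
        rw [h1]
        refine (norm_add_le _ _).trans ?_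
        rw [norm_smul, norm_smul]
        simp [abs_of_nonneg]
      have h3 : ‖B - ∑ k, M k‖ ^ 2 ≤ (1/2 * ‖B - S‖ + 1/2 * ‖B - S'‖) ^ 2 := by
        apply sq_le_sq' _ h2
        nlinarith [norm_nonneg (B - ∑ k, M k)]
      have h4 : (1/2 * ‖B - S‖ + 1/2 * ‖B - S'‖) ^ 2
          ≤ 1/2 * ‖B - S‖ ^ 2 + 1/2 * ‖B - S'‖ ^ 2 := by
        nlinarith [sq_nonneg (‖B - S‖ - ‖B - S'‖)]
      have h5 : (0:ℝ) < 1 / (2 * μ₀) := by positivity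
      nlinarith
    have hsum : ∑ k, (U k (M k) + χ k * ‖M k - Jp k‖)
        ≤ 1/2 * ∑ k, (U k (J k) + χ k * ‖J k - Jp k‖)
          + 1/2 * ∑ k, (U k (J' k) + χ k * ‖J' k - Jp k‖)
          - (1/8) * ∑ k, m k * ‖J k - J' k‖ ^ 2 := by
      have step : ∀ k ∈ (Finset.univ : Finset (Fin N)),
          U k (M k) + χ k * ‖M k - Jp k‖
            ≤ 1/2 * (U k (J k) + χ k * ‖J k - Jp k‖)
              + 1/2 * (U k (J' k) + χ k * ‖J' k - Jp k‖)
              - 1/8 * (m k * ‖J k - J' k‖ ^ 2) := by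
        intro k _
        have hU := (hUconv k).2 (Set.mem_univ (J k)) (Set.mem_univ (J' k))
          (by norm_num : (0:ℝ) ≤ 1/2) (by norm_num : (0:ℝ) ≤ 1/2) (by norm_num)
        simp only [smul_eq_mul] at hU
        have hχk : ‖M k - Jp k‖ ≤ 1/2 * ‖J k - Jp k‖ + 1/2 * ‖J' k - Jp k‖ := by
          have : M k - Jp k = (1/2 : ℝ) • (J k - Jp k) + (1/2 : ℝ) • (J' k - Jp k) := by
            rw [hM]; module
          rw [this]
          refine (norm_add_le _ _).trans ?_
          rw [norm_smul, norm_smul]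
          simp [abs_of_nonneg]
        have := mul_le_mul_of_nonneg_left hχk (hχ k)
        nlinarith [hU]
      calc ∑ k, (U k (M k) + χ k * ‖M k - Jp k‖)
          ≤ ∑ k, (1/2 * (U k (J k) + χ k * ‖J k - Jp k‖)
              + 1/2 * (U k (J' k) + χ k * ‖J' k - Jp k‖)
              - 1/8 * (m k * ‖J k - J' k‖ ^ 2)) := Finset.sum_le_sum step
        _ = 1/2 * ∑ k, (U k (J k) + χ k * ‖J k - Jp k‖)
              + 1/2 * ∑ k, (U k (J' k) + χ k * ‖J' k - Jp k‖)
              - (1/8) * ∑ k, m k * ‖J k - J' k‖ ^ 2 := by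
          rw [Finset.sum_sub_distrib, Finset.sum_add_distrib, ← Finset.mul_sum,
            ← Finset.mul_sum, ← Finset.mul_sum]
    have hφM : phiE μ₀ χ Jp U B M = 1 / (2 * μ₀) * ‖B - ∑ k, M k‖ ^ 2
        + ∑ k, (U k (M k) + χ k * ‖M k - Jp k‖) := rfl
    have hφJ : phiE μ₀ χ Jp U B J = 1 / (2 * μ₀) * ‖B - S‖ ^ 2
        + ∑ k, (U k (J k) + χ k * ‖J k - Jp k‖) := rfl
    have hφJ' : phiE μ₀ χ Jp U B J' = 1 / (2 * μ₀) * ‖B - S'‖ ^ 2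
        + ∑ k, (U k (J' k) + χ k * ‖J' k - Jp k‖) := rfl
    rw [hφM, hφJ, hφJ']
    linarith [hquad, hsum]
  have hgap : ∑ k, m k * ‖J k - J' k‖ ^ 2 ≤ 4 * (phiE μ₀ χ Jp U B J' - phiE μ₀ χ Jp U B J) := by
    have hminM : phiE μ₀ χ Jp U B J ≤ phiE μ₀ χ Jp U B M := hmin B M
    linarith [hminM, hmid]
  -- gap bound by inner product
  have hswap : phiE μ₀ χ Jp U B J' - phiE μ₀ χ Jp U B J ≤ (1 / μ₀) * ⟪B' - B, S' - S⟫ := by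
    have h1 : phiE μ₀ χ Jp U B' J' ≤ phiE μ₀ χ Jp U B' J := hmin B' J
    have h2 : phiE μ₀ χ Jp U B J' - phiE μ₀ χ Jp U B J ≤ (phiE μ₀ χ Jp U B J' - phiE μ₀ χ Jp U B' J') + (phiE μ₀ χ Jp U B' J - phiE μ₀ χ Jp U B J) := by linarith
    have h3 : (phiE μ₀ χ Jp U B J' - phiE μ₀ χ Jp U B' J') + (phiE μ₀ χ Jp U B' J - phiE μ₀ χ Jp U B J)
        = 1 / (2 * μ₀) * (‖B - S'‖ ^ 2 - ‖B' - S'‖ ^ 2 + ‖B' - S‖ ^ 2 - ‖B - S‖ ^ 2) := by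
      have e1 : phiE μ₀ χ Jp U B J' = 1 / (2 * μ₀) * ‖B - S'‖ ^ 2
          + ∑ k, (U k (J' k) + χ k * ‖J' k - Jp k‖) := rfl
      have e2 : phiE μ₀ χ Jp U B' J' = 1 / (2 * μ₀) * ‖B' - S'‖ ^ 2
          + ∑ k, (U k (J' k) + χ k * ‖J' k - Jp k‖) := rfl
      have e3 : phiE μ₀ χ Jp U B' J = 1 / (2 * μ₀) * ‖B' - S‖ ^ 2
          + ∑ k, (U k (J k) + χ k * ‖J k - Jp k‖) := rfl
      have e4 : phiE μ₀ χ Jp U B J = 1 / (2 * μ₀) * ‖B - S‖ ^ 2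
          + ∑ k, (U k (J k) + χ k * ‖J k - Jp k‖) := rfl
      rw [e1, e2, e3, e4]; ring
    rw [h3, quad_diff_identity B B' S S'] at h2
    calc phiE μ₀ χ Jp U B J' - phiE μ₀ χ Jp U B J ≤ 1 / (2 * μ₀) * (2 * ⟪B' - B, S' - S⟫) := h2
      _ = (1 / μ₀) * ⟪B' - B, S' - S⟫ := by field_simp
  -- combine
  set T : ℝ := ∑ k, ‖J' k - J k‖ with hT
  have hTnn : 0 ≤ T := Finset.sum_nonneg fun k _ => norm_nonneg _
  have hSS' : ‖S' - S‖ ≤ T := by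
    rw [hS, hS', ← Finset.sum_sub_distrib, hT]
    exact norm_sum_le _ _
  have hinner : ⟪B' - B, S' - S⟫ ≤ ‖B' - B‖ * T := by
    calc ⟪B' - B, S' - S⟫ ≤ ‖B' - B‖ * ‖S' - S‖ := real_inner_le_norm _ _
      _ ≤ ‖B' - B‖ * T := by
        exact mul_le_mul_of_nonneg_left hSS' (norm_nonneg _)
  have hCS : T ^ 2 ≤ N * ∑ k, ‖J' k - J k‖ ^ 2 := by
    have := sq_sum_le_card_mul_sum_sq (s := Finset.univ) (f := fun k => ‖J' k - J k‖)
    simpa [hT, Finset.card_univ] using this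
  have hmsum : mmin * ∑ k, ‖J' k - J k‖ ^ 2 ≤ ∑ k, m k * ‖J k - J' k‖ ^ 2 := by
    rw [Finset.mul_sum]
    apply Finset.sum_le_sum
    intro k _
    rw [norm_sub_rev (J k)]
    exact mul_le_mul_of_nonneg_right (hmmin_le k) (sq_nonneg _)
  -- mmin/N * T^2 ≤ 4/μ₀ * ‖B'-B‖ * T
  have hfinal : mmin * T ^ 2 ≤ N * (4 / μ₀ * (‖B' - B‖ * T)) := by
    have h6 : ∑ k, m k * ‖J k - J' k‖ ^ 2 ≤ 4 / μ₀ * (‖B' - B‖ * T) := by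
      calc ∑ k, m k * ‖J k - J' k‖ ^ 2 ≤ 4 * (phiE μ₀ χ Jp U B J' - phiE μ₀ χ Jp U B J) := hgap
        _ ≤ 4 * ((1 / μ₀) * ⟪B' - B, S' - S⟫) := by linarith [hswap]
        _ = 4 / μ₀ * ⟪B' - B, S' - S⟫ := by ring
        _ ≤ 4 / μ₀ * (‖B' - B‖ * T) :=
          mul_le_mul_of_nonneg_left hinner (by positivity)
    calc mmin * T ^ 2 ≤ mmin * (N * ∑ k, ‖J' k - J k‖ ^ 2) := by
          exact mul_le_mul_of_nonneg_left hCS (le_of_lt hmminpos)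
      _ = N * (mmin * ∑ k, ‖J' k - J k‖ ^ 2) := by ring
      _ ≤ N * ∑ k, m k * ‖J k - J' k‖ ^ 2 := by
          exact mul_le_mul_of_nonneg_left hmsum (le_of_lt hNpos)
      _ ≤ N * (4 / μ₀ * (‖B' - B‖ * T)) := by
          exact mul_le_mul_of_nonneg_left h6 (le_of_lt hNpos)
  -- conclude T ≤ C ‖B' - B‖
  clear_value T S S' M J J'
  clear hmid hgap hswap hinner hCS hmsum hMsum
  have hTC : T ≤ C * ‖B' - B‖ := by
    rcases eq_or_lt_of_le hTnn with hT0 | hTpos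
    · rw [← hT0]
      exact mul_nonneg (le_of_lt hCpos) (norm_nonneg _)
    · rw [hCdef, div_mul_eq_mul_div, le_div_iff₀ (mul_pos hmminpos hμ₀)]
      have hfinal' : mmin * T ^ 2 * μ₀ ≤ 4 * ↑N * (‖B' - B‖ * T) := by
        have h := mul_le_mul_of_nonneg_right hfinal (le_of_lt hμ₀)
        have e : ↑N * (4 / μ₀ * (‖B' - B‖ * T)) * μ₀ = 4 * ↑N * (‖B' - B‖ * T) := by
          field_simp
        linarith [h, e.le, e.ge]
      nlinarith [hfinal', hTpos]
  exact hTC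


/-- Assertion 4, gradient formula: the multi-pinning energy density has
gradient `(1/μ₀)(B − Σ_k J̃_k(B))`. -/
theorem inverse_operator_multiple_pinning_gradient
    {E : Type*} [NormedAddCommGroup E] [InnerProductSpace ℝ E] [FiniteDimensional ℝ E]
    (μ₀ : ℝ) (hμ₀ : 0 < μ₀) (N : ℕ) (hN : 1 ≤ N)
    (m χ : Fin N → ℝ) (hm : ∀ k, 0 < m k) (hχ : ∀ k, 0 ≤ χ k)
    (Jp : Fin N → E)
    (U : Fin N → E → ℝ) (hUcont : ∀ k, Continuous (U k))
    (hUconv : ∀ k, StrongConvexOn Set.univ (m k) (U k))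
    (Jtilde : E → Fin N → E)
    (hJtilde : ∀ B : E, ∀ Js : Fin N → E,
      1 / (2 * μ₀) * ‖B - ∑ k, Jtilde B k‖ ^ 2
          + ∑ k, (U k (Jtilde B k) + χ k * ‖Jtilde B k - Jp k‖)
        ≤ 1 / (2 * μ₀) * ‖B - ∑ k, Js k‖ ^ 2
          + ∑ k, (U k (Js k) + χ k * ‖Js k - Jp k‖)) :
    ∀ B : E, HasGradientAt
      (fun B' : E =>
        1 / (2 * μ₀) * ‖B' - ∑ k, Jtilde B' k‖ ^ 2
          + ∑ k, (U k (Jtilde B' k) + χ k * ‖Jtilde B' k - Jp k‖))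
      ((1 / μ₀) • (B - ∑ k, Jtilde B k)) B := by
  have hmin : ∀ b : E, ∀ Js : Fin N → E,
      phiE μ₀ χ Jp U b (Jtilde b) ≤ phiE μ₀ χ Jp U b Js := hJtilde
  obtain ⟨C, hCpos, key⟩ := multiPin_minimizer_lipschitz μ₀ hμ₀ N hN m χ hm hχ Jp U hUconv
    Jtilde hmin
  -- now the gradient
  intro B
  rw [hasGradientAt_iff_isLittleO]
  rw [Asymptotics.isLittleO_iff]
  set S : E := ∑ k, Jtilde B k with hS
  set K : ℝ := 1 / (2 * μ₀) + C / μ₀ with hK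
  have hKpos : 0 < K := by rw [hK]; positivity
  -- pointwise error bound
  have herr : ∀ x : E,
      |phiE μ₀ χ Jp U x (Jtilde x) - phiE μ₀ χ Jp U B (Jtilde B) - ⟪(1 / μ₀) • (B - S), x - B⟫| ≤ K * ‖x - B‖ ^ 2 := by
    intro x
    set S' : E := ∑ k, Jtilde x k with hS'
    have hg : ⟪(1 / μ₀) • (B - S), x - B⟫ = (1 / μ₀) * ⟪B - S, x - B⟫ := by
      rw [real_inner_smul_left]
    have hSS' : ‖S' - S‖ ≤ C * ‖x - B‖ := by
      calc ‖S' - S‖ ≤ ∑ k, ‖Jtilde x k - Jtilde B k‖ := by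
            rw [hS, hS', ← Finset.sum_sub_distrib]
            exact norm_sum_le _ _
        _ ≤ C * ‖x - B‖ := key B x
    -- upper bound
    have hup : phiE μ₀ χ Jp U x (Jtilde x) - phiE μ₀ χ Jp U B (Jtilde B) - ⟪(1 / μ₀) • (B - S), x - B⟫
        ≤ 1 / (2 * μ₀) * ‖x - B‖ ^ 2 := by
      have h1 : phiE μ₀ χ Jp U x (Jtilde x) ≤ phiE μ₀ χ Jp U x (Jtilde B) := hmin x (Jtilde B)
      have h2 : phiE μ₀ χ Jp U x (Jtilde B) - phiE μ₀ χ Jp U B (Jtilde B)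
          = 1 / (2 * μ₀) * (‖x - S‖ ^ 2 - ‖B - S‖ ^ 2) := by
        have e1 : phiE μ₀ χ Jp U x (Jtilde B) = 1 / (2 * μ₀) * ‖x - S‖ ^ 2
            + ∑ k, (U k (Jtilde B k) + χ k * ‖Jtilde B k - Jp k‖) := rfl
        have e2 : phiE μ₀ χ Jp U B (Jtilde B) = 1 / (2 * μ₀) * ‖B - S‖ ^ 2
            + ∑ k, (U k (Jtilde B k) + χ k * ‖Jtilde B k - Jp k‖) := rfl
        rw [e1, e2]; ring
      have h3 : ‖x - S‖ ^ 2 = ‖B - S‖ ^ 2 + 2 * ⟪B - S, x - B⟫ + ‖x - B‖ ^ 2 := by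
        have : x - S = (B - S) + (x - B) := by abel
        rw [this, norm_expand]
      rw [hg]
      have h4 : phiE μ₀ χ Jp U x (Jtilde B) - phiE μ₀ χ Jp U B (Jtilde B)
          = (1 / μ₀) * ⟪B - S, x - B⟫ + 1 / (2 * μ₀) * ‖x - B‖ ^ 2 := by
        rw [h2, h3]; field_simp; ring
      linarith
    -- lower bound
    have hlo : -(K * ‖x - B‖ ^ 2)
        ≤ phiE μ₀ χ Jp U x (Jtilde x) - phiE μ₀ χ Jp U B (Jtilde B) - ⟪(1 / μ₀) • (B - S), x - B⟫ := by
      have h1 : phiE μ₀ χ Jp U B (Jtilde B) ≤ phiE μ₀ χ Jp U B (Jtilde x) := hmin B (Jtilde x)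
      have h2 : phiE μ₀ χ Jp U x (Jtilde x) - phiE μ₀ χ Jp U B (Jtilde x)
          = 1 / (2 * μ₀) * (‖x - S'‖ ^ 2 - ‖B - S'‖ ^ 2) := by
        have e1 : phiE μ₀ χ Jp U x (Jtilde x) = 1 / (2 * μ₀) * ‖x - S'‖ ^ 2
            + ∑ k, (U k (Jtilde x k) + χ k * ‖Jtilde x k - Jp k‖) := rfl
        have e2 : phiE μ₀ χ Jp U B (Jtilde x) = 1 / (2 * μ₀) * ‖B - S'‖ ^ 2
            + ∑ k, (U k (Jtilde x k) + χ k * ‖Jtilde x k - Jp k‖) := rfl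
        rw [e1, e2]; ring
      have h3 : ‖x - S'‖ ^ 2 = ‖B - S'‖ ^ 2 + 2 * ⟪B - S', x - B⟫ + ‖x - B‖ ^ 2 := by
        have : x - S' = (B - S') + (x - B) := by abel
        rw [this, norm_expand]
      have h4 : phiE μ₀ χ Jp U x (Jtilde x) - phiE μ₀ χ Jp U B (Jtilde x)
          = (1 / μ₀) * ⟪B - S', x - B⟫ + 1 / (2 * μ₀) * ‖x - B‖ ^ 2 := by
        rw [h2, h3]; field_simp; ring
      have h5 : ⟪B - S', x - B⟫ = ⟪B - S, x - B⟫ + ⟪S - S', x - B⟫ := by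
        rw [← inner_add_left]; congr 1; abel
      have h6 : -(C * ‖x - B‖ * ‖x - B‖) ≤ ⟪S - S', x - B⟫ := by
        have := abs_real_inner_le_norm (S - S') (x - B)
        have h7 : ‖S - S'‖ ≤ C * ‖x - B‖ := by rwa [norm_sub_rev]
        have h8 : |⟪S - S', x - B⟫| ≤ C * ‖x - B‖ * ‖x - B‖ := by
          calc |⟪S - S', x - B⟫| ≤ ‖S - S'‖ * ‖x - B‖ := this
            _ ≤ C * ‖x - B‖ * ‖x - B‖ :=
              mul_le_mul_of_nonneg_right h7 (norm_nonneg _)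
        linarith [neg_abs_le ⟪S - S', x - B⟫]
      rw [hg]
      have hμinv : (0:ℝ) < 1 / μ₀ := by positivity
      have h5' : (1 / μ₀) * ⟪B - S', x - B⟫
          = (1 / μ₀) * ⟪B - S, x - B⟫ + (1 / μ₀) * ⟪S - S', x - B⟫ := by
        rw [h5]; ring
      have h9 : phiE μ₀ χ Jp U x (Jtilde x) - phiE μ₀ χ Jp U B (Jtilde B) - (1 / μ₀) * ⟪B - S, x - B⟫
          ≥ (1 / μ₀) * ⟪S - S', x - B⟫ + 1 / (2 * μ₀) * ‖x - B‖ ^ 2 := by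
        linarith [h1, h4, h5']
      have h10 : (1 / μ₀) * ⟪S - S', x - B⟫ ≥ -(1 / μ₀ * (C * ‖x - B‖ * ‖x - B‖)) := by
        have := mul_le_mul_of_nonneg_left h6 (le_of_lt hμinv)
        linarith [this]
      rw [hK]
      have hsq : ‖x - B‖ * ‖x - B‖ = ‖x - B‖ ^ 2 := by ring
      have hnn : 0 ≤ (1 / μ₀) * ‖x - B‖ ^ 2 :=
        mul_nonneg (le_of_lt hμinv) (sq_nonneg _)
      have hnn2 : 0 ≤ 1 / (2 * μ₀) * ‖x - B‖ ^ 2 :=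
        mul_nonneg (by positivity) (sq_nonneg _)
      have hfin : -((1 / (2 * μ₀) + C / μ₀) * ‖x - B‖ ^ 2)
          ≤ -(1 / μ₀ * (C * ‖x - B‖ * ‖x - B‖)) + 1 / (2 * μ₀) * ‖x - B‖ ^ 2 := by
        have he : 1 / μ₀ * (C * ‖x - B‖ * ‖x - B‖) = C / μ₀ * ‖x - B‖ ^ 2 := by ring
        rw [he]
        linarith [hnn2]
      linarith [h9, h10, hfin]
    rw [abs_le]
    have hnn3 : 0 ≤ C / μ₀ * ‖x - B‖ ^ 2 :=
      mul_nonneg (div_nonneg (le_of_lt hCpos) (le_of_lt hμ₀)) (sq_nonneg _)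
    rw [hK]
    constructor <;> [linarith [hlo]; linarith [hup, hnn3]]
  intro c hc
  have hball : Metric.ball B (c / (K + 1)) ∈ nhds B :=
    Metric.ball_mem_nhds B (by positivity)
  filter_upwards [hball] with x hx
  have hxB : ‖x - B‖ < c / (K + 1) := by
    rwa [Metric.mem_ball, dist_eq_norm] at hx
  have h1 := herr x
  have h2 : K * ‖x - B‖ ^ 2 ≤ c * ‖x - B‖ := by
    have hnn : 0 ≤ ‖x - B‖ := norm_nonneg _
    have : K * ‖x - B‖ ≤ c := by
      have := mul_le_mul_of_nonneg_left (le_of_lt hxB) (le_of_lt hKpos)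
      calc K * ‖x - B‖ ≤ K * (c / (K + 1)) := this
        _ = K * c / (K + 1) := by ring
        _ ≤ c := by
          rw [div_le_iff₀ (by linarith [hKpos] : (0:ℝ) < K + 1)]
          nlinarith [hc.le, hKpos]
    nlinarith [hnn, this]
  calc ‖phiE μ₀ χ Jp U x (Jtilde x) - phiE μ₀ χ Jp U B (Jtilde B) - ⟪(1 / μ₀) • (B - S), x - B⟫‖
      = |phiE μ₀ χ Jp U x (Jtilde x) - phiE μ₀ χ Jp U B (Jtilde B) - ⟪(1 / μ₀) • (B - S), x - B⟫| := rfl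
    _ ≤ K * ‖x - B‖ ^ 2 := h1
    _ ≤ c * ‖x - B‖ := h2
    _ = c * ‖x - B‖ := rfl
end

section
/- (Equivalence of forward and inverse hysteresis operators, multiple pinning forces.) Let E be a finite-dimensional real inner product space, let μ₀ > 0 and N ≥ 1, and for k = 1,…,N let m_k > 0, χ_k ≥ 0, J_{p,k} ∈ E, and let U_k : E → ℝ be continuous and m_k-strongly convex. Given H ∈ E, for each k let J_k* be the unique minimizer of J ↦ U_k(J) − ⟪H, J⟫ + χ_k‖J − J_{p,k}‖, and set B = μ₀ • H + Σ_{k=1}^{N} J_k*. Then the tuple (J_1*,…,J_N*) is the unique minimizer of (J_1,…,J_N) ↦ (1/(2μ₀))‖B − Σ_k J_k‖² + Σ_k ( U_k(J_k) + χ_k‖J_k − J_{p,k}‖ ), and consequently H = (1/μ₀)(B − Σ_k J_k*). -/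
/-!
Write `g_k(J) = U_k(J) - ⟪H, J⟫ + χ_k ‖J - J_{p,k}‖` for the forward energies and `F` for the
inverse energy. Since `B - ∑ J_k* = μ₀ H`, expanding the square gives, for every tuple `J`,
`F(J) = F(J*) + ∑_k (g_k(J_k) - g_k(J_k*)) + ‖∑_k (J_k* - J_k)‖² / (2μ₀)`,
and both correction terms are nonnegative. A minimizer of `F` makes them vanish, so each of its
components minimizes the strictly convex `g_k`, hence equals `J_k*`.
-/

open RealInnerProductSpace

section Energies

variable {E : Type*} [NormedAddCommGroup E] [InnerProductSpace ℝ E]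

def forwardEnergy (U : E → ℝ) (χ : ℝ) (Jp H J : E) : ℝ :=
  U J - ⟪H, J⟫ + χ * ‖J - Jp‖

noncomputable def inverseEnergy {ι : Type*} [Fintype ι] (μ₀ : ℝ) (U : ι → E → ℝ) (χ : ι → ℝ)
    (Jp : ι → E) (B : E) (Js : ι → E) : ℝ :=
  1 / (2 * μ₀) * ‖B - ∑ k, Js k‖ ^ 2 + ∑ k, (U k (Js k) + χ k * ‖Js k - Jp k‖)

theorem strictConvexOn_forwardEnergy {U : E → ℝ} {m χ : ℝ} (hm : 0 < m)
    (hU : StrongConvexOn Set.univ m U) (hχ : 0 ≤ χ) (Jp H : E) :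
    StrictConvexOn ℝ Set.univ (forwardEnergy U χ Jp H) := by
  have hlin : ConvexOn ℝ Set.univ fun J : E => -⟪H, J⟫ :=
    (-(innerSL ℝ H).toLinearMap).convexOn convex_univ
  have hpin : ConvexOn ℝ Set.univ fun J : E => χ * ‖J - Jp‖ := by
    simpa only [dist_eq_norm, smul_eq_mul] using (convexOn_univ_dist Jp).smul hχ
  exact ((hU.strictConvexOn hm).add_convexOn hlin).add_convexOn hpin

theorem one_div_two_mul_mul_norm_smul_add_sq {μ : ℝ} (hμ : μ ≠ 0) (H d : E) :
    1 / (2 * μ) * ‖μ • H + d‖ ^ 2 = 1 / (2 * μ) * ‖μ • H‖ ^ 2 + ⟪H, d⟫ + ‖d‖ ^ 2 / (2 * μ) := by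
  rw [norm_add_sq_real, real_inner_smul_left]
  field_simp

section Tuples

variable {ι : Type*} [Fintype ι] {μ₀ : ℝ} {U : ι → E → ℝ} {χ : ι → ℝ} {Jp : ι → E} {H B : E}
  {Jstar : ι → E}

theorem inverseEnergy_eq_add (hμ₀ : μ₀ ≠ 0) (hB : B = μ₀ • H + ∑ k, Jstar k) (Js : ι → E) :
    inverseEnergy μ₀ U χ Jp B Js = inverseEnergy μ₀ U χ Jp B Jstar
      + ∑ k, (forwardEnergy (U k) (χ k) (Jp k) H (Js k)
        - forwardEnergy (U k) (χ k) (Jp k) H (Jstar k))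
      + ‖∑ k, (Jstar k - Js k)‖ ^ 2 / (2 * μ₀) := by
  have hJs : B - ∑ k, Js k = μ₀ • H + ∑ k, (Jstar k - Js k) := by
    rw [hB, Finset.sum_sub_distrib]; abel
  have hJstar : B - ∑ k, Jstar k = μ₀ • H + 0 := by
    rw [hB]; abel
  simp only [inverseEnergy, forwardEnergy, hJs, hJstar,
    one_div_two_mul_mul_norm_smul_add_sq hμ₀, inner_zero_right, norm_zero, inner_sum,
    inner_sub_right, Finset.sum_sub_distrib, Finset.sum_add_distrib]
  ring

theorem inverseEnergy_le_of_forall_forwardEnergy_le (hμ₀ : 0 < μ₀)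
    (hB : B = μ₀ • H + ∑ k, Jstar k)
    (hJstar : ∀ k J, forwardEnergy (U k) (χ k) (Jp k) H (Jstar k)
      ≤ forwardEnergy (U k) (χ k) (Jp k) H J) (Js : ι → E) :
    inverseEnergy μ₀ U χ Jp B Jstar ≤ inverseEnergy μ₀ U χ Jp B Js := by
  rw [inverseEnergy_eq_add hμ₀.ne' hB Js]
  have hgap : 0 ≤ ∑ k, (forwardEnergy (U k) (χ k) (Jp k) H (Js k)
      - forwardEnergy (U k) (χ k) (Jp k) H (Jstar k)) :=
    Finset.sum_nonneg fun k _ => sub_nonneg.mpr (hJstar k (Js k))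
  have hsq : 0 ≤ ‖∑ k, (Jstar k - Js k)‖ ^ 2 / (2 * μ₀) := by positivity
  linarith

theorem eq_of_inverseEnergy_le (hμ₀ : 0 < μ₀) (hB : B = μ₀ • H + ∑ k, Jstar k)
    (hJstar : ∀ k J, forwardEnergy (U k) (χ k) (Jp k) H (Jstar k)
      ≤ forwardEnergy (U k) (χ k) (Jp k) H J)
    (hstrict : ∀ k, StrictConvexOn ℝ Set.univ (forwardEnergy (U k) (χ k) (Jp k) H))
    {Js : ι → E} (hJs : inverseEnergy μ₀ U χ Jp B Js ≤ inverseEnergy μ₀ U χ Jp B Jstar) :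
    Js = Jstar := by
  have hgap : ∀ k ∈ Finset.univ, 0 ≤ forwardEnergy (U k) (χ k) (Jp k) H (Js k)
      - forwardEnergy (U k) (χ k) (Jp k) H (Jstar k) :=
    fun k _ => sub_nonneg.mpr (hJstar k (Js k))
  have hgap_sum : ∑ k, (forwardEnergy (U k) (χ k) (Jp k) H (Js k)
      - forwardEnergy (U k) (χ k) (Jp k) H (Jstar k)) = 0 := by
    rw [inverseEnergy_eq_add hμ₀.ne' hB Js] at hJs
    have hsq : 0 ≤ ‖∑ k, (Jstar k - Js k)‖ ^ 2 / (2 * μ₀) := by positivity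
    linarith [Finset.sum_nonneg hgap]
  funext k
  have hk : forwardEnergy (U k) (χ k) (Jp k) H (Js k)
      ≤ forwardEnergy (U k) (χ k) (Jp k) H (Jstar k) :=
    sub_nonpos.mp ((Finset.sum_eq_zero_iff_of_nonneg hgap).mp hgap_sum k (Finset.mem_univ k)).le
  exact (hstrict k).eq_of_isMinOn (isMinOn_univ_iff.mpr fun J => hk.trans (hJstar k J))
    (isMinOn_univ_iff.mpr (hJstar k)) trivial trivial

end Tuples

end Energies

theorem forward_inverse_equivalence_multiple_general
    {E : Type*} [NormedAddCommGroup E] [InnerProductSpace ℝ E]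
    (μ₀ : ℝ) (hμ₀ : 0 < μ₀) (N : ℕ)
    (m χ : Fin N → ℝ) (hm : ∀ k, 0 < m k) (hχ : ∀ k, 0 ≤ χ k)
    (Jp : Fin N → E)
    (U : Fin N → E → ℝ)
    (hUconv : ∀ k, StrongConvexOn Set.univ (m k) (U k))
    (H : E) (Jstar : Fin N → E)
    (hJstar : ∀ k, ∀ J : E,
      U k (Jstar k) - ⟪H, Jstar k⟫ + χ k * ‖Jstar k - Jp k‖
        ≤ U k J - ⟪H, J⟫ + χ k * ‖J - Jp k‖)
    (B : E) (hB : B = μ₀ • H + ∑ k, Jstar k) :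
    (∀ Js : Fin N → E,
      1 / (2 * μ₀) * ‖B - ∑ k, Jstar k‖ ^ 2
          + ∑ k, (U k (Jstar k) + χ k * ‖Jstar k - Jp k‖)
        ≤ 1 / (2 * μ₀) * ‖B - ∑ k, Js k‖ ^ 2
          + ∑ k, (U k (Js k) + χ k * ‖Js k - Jp k‖)) ∧
    (∀ Js' : Fin N → E,
      (∀ Js : Fin N → E,
        1 / (2 * μ₀) * ‖B - ∑ k, Js' k‖ ^ 2
            + ∑ k, (U k (Js' k) + χ k * ‖Js' k - Jp k‖)
          ≤ 1 / (2 * μ₀) * ‖B - ∑ k, Js k‖ ^ 2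
            + ∑ k, (U k (Js k) + χ k * ‖Js k - Jp k‖)) → Js' = Jstar) ∧
    H = (1 / μ₀) • (B - ∑ k, Jstar k) := by
  have hstrict k : StrictConvexOn ℝ Set.univ (forwardEnergy (U k) (χ k) (Jp k) H) :=
    strictConvexOn_forwardEnergy (hm k) (hUconv k) (hχ k) (Jp k) H
  refine ⟨inverseEnergy_le_of_forall_forwardEnergy_le (U := U) hμ₀ hB hJstar,
    fun Js' hJs' => eq_of_inverseEnergy_le hμ₀ hB hJstar hstrict (hJs' Jstar), ?_⟩
  rw [hB, add_sub_cancel_right, smul_smul, one_div, inv_mul_cancel₀ hμ₀.ne', one_smul]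

/-- equivalence of the forward and inverse hysteresis operators with
multiple pinning forces. -/
theorem forward_inverse_equivalence_multiple
    {E : Type*} [NormedAddCommGroup E] [InnerProductSpace ℝ E] [FiniteDimensional ℝ E]
    (μ₀ : ℝ) (hμ₀ : 0 < μ₀) (N : ℕ) (hN : 1 ≤ N)
    (m χ : Fin N → ℝ) (hm : ∀ k, 0 < m k) (hχ : ∀ k, 0 ≤ χ k)
    (Jp : Fin N → E)
    (U : Fin N → E → ℝ) (hUcont : ∀ k, Continuous (U k))
    (hUconv : ∀ k, StrongConvexOn Set.univ (m k) (U k))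
    (H : E) (Jstar : Fin N → E)
    (hJstar : ∀ k, ∀ J : E,
      U k (Jstar k) - ⟪H, Jstar k⟫ + χ k * ‖Jstar k - Jp k‖
        ≤ U k J - ⟪H, J⟫ + χ k * ‖J - Jp k‖)
    (B : E) (hB : B = μ₀ • H + ∑ k, Jstar k) :
    (∀ Js : Fin N → E,
      1 / (2 * μ₀) * ‖B - ∑ k, Jstar k‖ ^ 2
          + ∑ k, (U k (Jstar k) + χ k * ‖Jstar k - Jp k‖)
        ≤ 1 / (2 * μ₀) * ‖B - ∑ k, Js k‖ ^ 2
          + ∑ k, (U k (Js k) + χ k * ‖Js k - Jp k‖)) ∧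
    (∀ Js' : Fin N → E,
      (∀ Js : Fin N → E,
        1 / (2 * μ₀) * ‖B - ∑ k, Js' k‖ ^ 2
            + ∑ k, (U k (Js' k) + χ k * ‖Js' k - Jp k‖)
          ≤ 1 / (2 * μ₀) * ‖B - ∑ k, Js k‖ ^ 2
            + ∑ k, (U k (Js k) + χ k * ‖Js k - Jp k‖)) → Js' = Jstar) ∧
    H = (1 / μ₀) • (B - ∑ k, Jstar k) :=
  forward_inverse_equivalence_multiple_general μ₀ hμ₀ N m χ hm hχ Jp U hUconv H Jstar hJstar B hB
end

section
/- Let E be a finite-dimensional real inner product space and let A > 0, w > 0, J_s > 0. Define U on the open ball {J ∈ E : ‖J‖ < w·J_s} by U(J) = −(A·w·J_s/π)·log( cos( (π/2)·‖J‖/(w·J_s) ) ). Then U is convex on this open ball, U(J) ≥ 0 for all J in the ball, and U(0) = 0. -/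
open RealInnerProductSpace

section AuxInternalEnergy

open Real Set

lemma aux_mem (r t : ℝ) (hr : 0 < r) (ht : t ∈ Ioo (-r) r) :
    Real.pi / 2 * (t / r) ∈ Ioo (-(Real.pi/2)) (Real.pi/2) := by
  constructor
  · rw [neg_lt]
    have : -(π/2 * (t/r)) = π/2 * ((-t)/r) := by ring
    rw [this]
    calc π/2 * ((-t)/r) < π/2 * 1 := by
          apply mul_lt_mul_of_pos_left _ (by positivity)
          rw [div_lt_one hr]; linarith [ht.1]
      _ = π/2 := mul_one _
  · calc π/2 * (t/r) < π/2 * 1 := by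
          apply mul_lt_mul_of_pos_left _ (by positivity)
          rw [div_lt_one hr]; exact ht.2
      _ = π/2 := mul_one _

lemma aux_convex_s18 (r : ℝ) (hr : 0 < r) :
    ConvexOn ℝ (Ioo (-r) r) (fun t : ℝ => -Real.log (Real.cos (Real.pi / 2 * (t / r)))) := by
  have hcospos : ∀ t ∈ Ioo (-r) r, 0 < Real.cos (Real.pi / 2 * (t / r)) := fun t ht =>
    Real.cos_pos_of_mem_Ioo (aux_mem r t hr ht)
  have hmap : ConcaveOn ℝ (Icc (-(π/2)) (π/2)) Real.cos := strictConcaveOn_cos_Icc.concaveOn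
  have hneglog : ConvexOn ℝ (Ioi (0:ℝ)) (fun x : ℝ => -Real.log x) :=
    strictConcaveOn_log_Ioi.concaveOn.neg
  refine ⟨convex_Ioo _ _, fun x hx y hy a b ha hb hab => ?_⟩
  have hx' := aux_mem r x hr hx
  have hy' := aux_mem r y hr hy
  have hpx := hcospos x hx
  have hpy := hcospos y hy
  have hmem : a • x + b • y ∈ Ioo (-r) r := (convex_Ioo (-r) r) hx hy ha hb hab
  have hconc : a * Real.cos (π/2 * (x/r)) + b * Real.cos (π/2 * (y/r)) ≤
      Real.cos (π/2 * ((a • x + b • y) / r)) := by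
    have key := hmap.2 (Ioo_subset_Icc_self hx') (Ioo_subset_Icc_self hy') ha hb hab
    have heq : π/2 * ((a • x + b • y) / r) = a • (π/2 * (x/r)) + b • (π/2 * (y/r)) := by
      simp only [smul_eq_mul]; field_simp
    rw [heq]; simpa using key
  have hcombpos : 0 < a * Real.cos (π/2 * (x/r)) + b * Real.cos (π/2 * (y/r)) := by
    rcases eq_or_lt_of_le ha with h | h
    · have hb1 : b = 1 := by linarith
      simp [← h, hb1]; positivity
    · have : 0 ≤ b * Real.cos (π/2 * (y/r)) := by positivity
      nlinarith
  calc -Real.log (Real.cos (π/2 * ((a • x + b • y) / r)))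
      ≤ -Real.log (a * Real.cos (π/2 * (x/r)) + b * Real.cos (π/2 * (y/r))) := by
        apply neg_le_neg
        exact Real.log_le_log hcombpos hconc
    _ ≤ a • (-Real.log (Real.cos (π/2 * (x/r)))) + b • (-Real.log (Real.cos (π/2 * (y/r)))) := by
        have := hneglog.2 (mem_Ioi.2 hpx) (mem_Ioi.2 hpy) ha hb hab
        simpa using this

lemma aux_mono (r : ℝ) (hr : 0 < r) :
    MonotoneOn (fun t : ℝ => -Real.log (Real.cos (Real.pi / 2 * (t / r)))) (Ico 0 r) := by
  intro s hs t ht hst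
  have hks : π/2 * (s/r) ∈ Icc 0 π := by
    constructor
    · have := hs.1; positivity
    · have : π/2 * (s/r) < π/2 := (aux_mem r s hr ⟨by linarith [hs.1], hs.2⟩).2
      linarith [Real.pi_pos]
  have hkt : π/2 * (t/r) ∈ Icc 0 π := by
    constructor
    · have := ht.1; positivity
    · have : π/2 * (t/r) < π/2 := (aux_mem r t hr ⟨by linarith [ht.1], ht.2⟩).2
      linarith [Real.pi_pos]
  have hle : π/2 * (s/r) ≤ π/2 * (t/r) := by
    apply mul_le_mul_of_nonneg_left _ (by positivity)
    exact by gcongr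
  have hcos : Real.cos (π/2 * (t/r)) ≤ Real.cos (π/2 * (s/r)) :=
    Real.strictAntiOn_cos.antitoneOn hks hkt hle
  have hpt : 0 < Real.cos (π/2 * (t/r)) :=
    Real.cos_pos_of_mem_Ioo (aux_mem r t hr ⟨by linarith [ht.1], ht.2⟩)
  exact neg_le_neg (Real.log_le_log hpt hcos)

end AuxInternalEnergy

/-- the internal magnetic energy density
`U(J) = −(A·w·J_s/π)·log(cos((π/2)‖J‖/(w·J_s)))` is convex and nonnegative on the open
ball of radius `w·J_s`, and vanishes at `0`. -/
theorem internal_energy_density_properties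
    {E : Type*} [NormedAddCommGroup E] [InnerProductSpace ℝ E] [FiniteDimensional ℝ E]
    (A w Js : ℝ) (hA : 0 < A) (hw : 0 < w) (hJs : 0 < Js) :
    ConvexOn ℝ (Metric.ball (0 : E) (w * Js))
      (fun J : E =>
        -(A * w * Js / Real.pi) * Real.log (Real.cos (Real.pi / 2 * (‖J‖ / (w * Js))))) ∧
    (∀ J ∈ Metric.ball (0 : E) (w * Js),
      0 ≤ -(A * w * Js / Real.pi) * Real.log (Real.cos (Real.pi / 2 * (‖J‖ / (w * Js))))) ∧
    -(A * w * Js / Real.pi) * Real.log (Real.cos (Real.pi / 2 * (‖(0 : E)‖ / (w * Js)))) = 0 := by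
  set r := w * Js with hrdef
  have hr : 0 < r := by positivity
  have hc : 0 < A * w * Js / Real.pi := by
    have := Real.pi_pos; positivity
  set c := A * w * Js / Real.pi with hcdef
  set g : ℝ → ℝ := fun t => -Real.log (Real.cos (Real.pi / 2 * (t / r))) with hgdef
  have hgconv := aux_convex_s18 r hr
  have hgmono := aux_mono r hr
  refine ⟨?_, ?_, ?_⟩
  · refine ⟨convex_ball _ _, fun x hx y hy a b ha hb hab => ?_⟩
    rw [mem_ball_zero_iff] at hx hy
    have hnx : ‖x‖ ∈ Set.Ioo (-r) r := ⟨by linarith [norm_nonneg x], hx⟩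
    have hny : ‖y‖ ∈ Set.Ioo (-r) r := ⟨by linarith [norm_nonneg y], hy⟩
    have hcomb : a * ‖x‖ + b * ‖y‖ < r := by
      rcases eq_or_lt_of_le ha with h | h
      · have hb1 : b = 1 := by linarith
        simp [← h, hb1]; linarith
      · nlinarith [norm_nonneg x, norm_nonneg y]
    have hnorm : ‖a • x + b • y‖ ≤ a * ‖x‖ + b * ‖y‖ := by
      calc ‖a • x + b • y‖ ≤ ‖a • x‖ + ‖b • y‖ := norm_add_le _ _
        _ = a * ‖x‖ + b * ‖y‖ := by rw [norm_smul, norm_smul, Real.norm_of_nonneg ha,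
            Real.norm_of_nonneg hb]
    have hmem1 : ‖a • x + b • y‖ ∈ Set.Ico 0 r := ⟨norm_nonneg _, lt_of_le_of_lt hnorm hcomb⟩
    have hmem2 : a * ‖x‖ + b * ‖y‖ ∈ Set.Ico 0 r :=
      ⟨by positivity, hcomb⟩
    have step1 : g ‖a • x + b • y‖ ≤ g (a * ‖x‖ + b * ‖y‖) := hgmono hmem1 hmem2 hnorm
    have step2 : g (a * ‖x‖ + b * ‖y‖) ≤ a * g ‖x‖ + b * g ‖y‖ := by
      have := hgconv.2 hnx hny ha hb hab
      simpa only [smul_eq_mul] using this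
    have key : g ‖a • x + b • y‖ ≤ a * g ‖x‖ + b * g ‖y‖ := le_trans step1 step2
    have : c * g ‖a • x + b • y‖ ≤ c * (a * g ‖x‖ + b * g ‖y‖) :=
      mul_le_mul_of_nonneg_left key hc.le
    simp only [smul_eq_mul, hgdef] at this ⊢
    nlinarith [this]
  · intro J hJ
    rw [mem_ball_zero_iff] at hJ
    have hmem := aux_mem r ‖J‖ hr ⟨by linarith [norm_nonneg J], hJ⟩
    have hcos : 0 < Real.cos (Real.pi / 2 * (‖J‖ / r)) := Real.cos_pos_of_mem_Ioo hmem
    have hlog : Real.log (Real.cos (Real.pi / 2 * (‖J‖ / r))) ≤ 0 :=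
      Real.log_nonpos hcos.le (Real.cos_le_one _)
    nlinarith
  · simp
end
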